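/- arXiv:1805.09361 — 8 statements merged into one kernel-verified Lean document; each statement's English description precedes it below -/
import Mathlib

section
/- Let n ≥ 2 be an even integer and let P_n denote the path graph on n vertices. Then the eccentric connectivity index of P_n equals (3n² − 6n + 4)/2, i.e. ξ^c(P_n) = (3n² − 6n + 4)/2. -/
/-- The eccentricity of a vertex `v` in a finite graph `G`:
the maximum distance from `v` to any vertex of `G`. -/
noncomputable def SimpleGraph.ecc {V : Type*} [Fintype V] (G : SimpleGraph V) (v : V) : ℕ :=
  Finset.univ.sup fun u => G.dist v u

/-- The eccentric connectivity index of a finite graph `G`: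
`ξ^c(G) = ∑_{v ∈ V(G)} ε(v) · d(v)`. -/
noncomputable def SimpleGraph.eci {V : Type*} [Fintype V] (G : SimpleGraph V) : ℕ :=
  ∑ v, G.ecc v * Nat.card (G.neighborSet v)

open SimpleGraph Finset

private lemma walk_len_lb' {n : ℕ} {u v : Fin n} (w : (pathGraph n).Walk u v) :
    Nat.dist u.val v.val ≤ w.length := by
  induction w with
  | nil => simp [Nat.dist]
  | @cons a b c h p ih =>
    have hab : Nat.dist a.val b.val = 1 := by
      rw [pathGraph_adj] at h
      simp [Nat.dist]; omega
    calc Nat.dist a.val c.val ≤ Nat.dist a.val b.val + Nat.dist b.val c.val :=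
          Nat.dist.triangle_inequality _ _ _
      _ ≤ 1 + p.length := by rw [hab]; exact Nat.add_le_add_left ih 1
      _ = (p.cons h).length := by simp [Nat.add_comm]

private lemma dist_ub' {n : ℕ} (k i : ℕ) (h : i + k < n + 1) :
    (pathGraph (n + 1)).dist ⟨i, by omega⟩ ⟨i + k, h⟩ ≤ k := by
  induction k generalizing i with
  | zero => simp
  | succ k ih =>
    have h1 : (pathGraph (n+1)).dist ⟨i, by omega⟩ ⟨i+1, by omega⟩ = 1 := by
      rw [SimpleGraph.dist_eq_one_iff_adj, pathGraph_adj]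
      left; rfl
    have he : (⟨i+1+k, by omega⟩ : Fin (n+1)) = ⟨i + (k+1), h⟩ := by
      apply Fin.ext; simp; omega
    have h2 := ih (i+1) (by omega)
    rw [he] at h2
    calc (pathGraph (n+1)).dist ⟨i, by omega⟩ ⟨i + (k+1), h⟩
        ≤ (pathGraph (n+1)).dist ⟨i, by omega⟩ ⟨i+1, by omega⟩ +
          (pathGraph (n+1)).dist ⟨i+1, by omega⟩ ⟨i + (k+1), h⟩ :=
          (pathGraph_connected n).dist_triangle
      _ ≤ 1 + k := by rw [h1]; exact Nat.add_le_add_left h2 1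
      _ = k + 1 := Nat.add_comm _ _

private lemma dist_pathGraph' {n : ℕ} (u v : Fin (n+1)) :
    (pathGraph (n+1)).dist u v = Nat.dist u.val v.val := by
  refine le_antisymm ?_ ?_
  · rcases le_total u.val v.val with h | h
    · have h2 := dist_ub' (v.val - u.val) u.val (by omega : u.val + (v.val - u.val) < n + 1)
      have he1 : (⟨u.val, by omega⟩ : Fin (n+1)) = u := Fin.ext rfl
      have he : (⟨u.val + (v.val - u.val), by omega⟩ : Fin (n+1)) = v := by
        apply Fin.ext; simp; omega
      rw [he, he1] at h2
      have hd : Nat.dist u.val v.val = v.val - u.val := by simp [Nat.dist]; omega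
      rw [hd]; exact h2
    · have h2 := dist_ub' (u.val - v.val) v.val (by omega : v.val + (u.val - v.val) < n + 1)
      have he1 : (⟨v.val, by omega⟩ : Fin (n+1)) = v := Fin.ext rfl
      have he : (⟨v.val + (u.val - v.val), by omega⟩ : Fin (n+1)) = u := by
        apply Fin.ext; simp; omega
      rw [he, he1] at h2
      have hd : Nat.dist u.val v.val = u.val - v.val := by simp [Nat.dist]; omega
      rw [hd, SimpleGraph.dist_comm]; exact h2
  · obtain ⟨p, hp⟩ := (pathGraph_connected n).exists_walk_length_eq_dist u v
    rw [← hp]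
    exact walk_len_lb' p

private lemma ecc_pathGraph' {n : ℕ} (v : Fin (n+1)) :
    (pathGraph (n+1)).ecc v = max v.val (n - v.val) := by
  unfold SimpleGraph.ecc
  apply le_antisymm
  · apply Finset.sup_le
    intro u _
    rw [dist_pathGraph']
    have := u.isLt
    simp [Nat.dist]; omega
  · apply max_le
    · have h : (pathGraph (n+1)).dist v ⟨0, by omega⟩ ≤
          Finset.univ.sup fun u => (pathGraph (n+1)).dist v u :=
        Finset.le_sup (Finset.mem_univ _)
      have e0 : (pathGraph (n+1)).dist v ⟨0, by omega⟩ = v.val := by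
        rw [dist_pathGraph']; simp [Nat.dist]
      rwa [e0] at h
    · have h : (pathGraph (n+1)).dist v ⟨n, by omega⟩ ≤
          Finset.univ.sup fun u => (pathGraph (n+1)).dist v u :=
        Finset.le_sup (Finset.mem_univ _)
      have hv := v.isLt
      have e0 : (pathGraph (n+1)).dist v ⟨n, by omega⟩ = n - v.val := by
        rw [dist_pathGraph']; simp [Nat.dist]; omega
      rwa [e0] at h

private lemma deg_pathGraph' {n : ℕ} (hn : 2 ≤ n) (v : Fin n) :
    Nat.card ((pathGraph n).neighborSet v) =
      if v.val = 0 ∨ v.val = n - 1 then 1 else 2 := by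
  rcases Nat.lt_or_ge v.val (n-1) with hlt | hge
  · rcases Nat.eq_zero_or_pos v.val with h0 | hpos
    · have : (pathGraph n).neighborSet v = {(⟨1, by omega⟩ : Fin n)} := by
        ext u
        simp [neighborSet, pathGraph_adj, Fin.ext_iff]
        omega
      rw [this]
      simp [h0]
    · have : (pathGraph n).neighborSet v =
          {(⟨v.val - 1, by omega⟩ : Fin n), (⟨v.val + 1, by omega⟩ : Fin n)} := by
        ext u
        simp [neighborSet, pathGraph_adj, Fin.ext_iff]
        omega
      rw [this, Nat.card_coe_set_eq,
        Set.ncard_pair (by simp only [ne_eq, Fin.mk.injEq]; omega)]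
      have : ¬(v.val = 0 ∨ v.val = n - 1) := by omega
      simp [this]
  · have hv : v.val = n - 1 := by have := v.isLt; omega
    have : (pathGraph n).neighborSet v = {(⟨n - 2, by omega⟩ : Fin n)} := by
      ext u
      simp [neighborSet, pathGraph_adj, Fin.ext_iff]
      have := u.isLt
      omega
    rw [this]
    simp [hv]

private lemma Tsum' (j : ℕ) : ∑ i ∈ range (2*j), max (i+1) (2*j - i) = 3*j^2 + j := by
  induction j with
  | zero => simp
  | succ j ih =>
    have h2 : 2*(j+1) = (2*j+1) + 1 := by ring
    rw [h2, Finset.sum_range_succ, Finset.sum_range_succ']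
    have hmid : ∀ i ∈ range (2*j), max ((i+1)+1) (2*j+1+1 - (i+1)) =
        (max (i+1) (2*j - i)) + 1 := by
      intro i hi
      rw [Finset.mem_range] at hi
      omega
    rw [Finset.sum_congr rfl hmid, Finset.sum_add_distrib, ih]
    simp only [Finset.sum_const, Finset.card_range, smul_eq_mul, mul_one]
    have e0 : max (0+1) (2*j+1+1 - 0) = 2*j+2 := by omega
    have e1 : max ((2*j+1)+1) (2*j+1+1 - (2*j+1)) = 2*j+2 := by omega
    rw [e0, e1]; ring_nf

private lemma Ssum' (k : ℕ) (hk : 1 ≤ k) :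
    ∑ i ∈ range (2*k), (max i (2*k-1-i)) * (if i = 0 ∨ i = 2*k-1 then 1 else 2)
      = 6*k^2 - 6*k + 2 := by
  obtain ⟨j, rfl⟩ : ∃ j, k = j + 1 := ⟨k - 1, by omega⟩
  have h2 : 2*(j+1) = (2*j+1) + 1 := by ring
  rw [h2, Finset.sum_range_succ, Finset.sum_range_succ']
  have hmid : ∀ i ∈ range (2*j),
      (max (i+1) (2*j+1+1-1-(i+1))) * (if i+1 = 0 ∨ i+1 = 2*j+1+1-1 then 1 else 2)
      = 2 * max (i+1) (2*j - i) := by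
    intro i hi
    rw [Finset.mem_range] at hi
    have hne : ¬(i+1 = 0 ∨ i+1 = 2*j+1+1-1) := by omega
    rw [if_neg hne]
    have : 2*j+1+1-1-(i+1) = 2*j - i := by omega
    rw [this]; ring
  rw [Finset.sum_congr rfl hmid, ← Finset.mul_sum, Tsum']
  have e0 : (max 0 (2*j+1+1-1-0)) * (if (0:ℕ) = 0 ∨ (0:ℕ) = 2*j+1+1-1 then 1 else 2)
      = 2*j+1 := by simp
  have e1 : (max (2*j+1) (2*j+1+1-1-(2*j+1))) *
      (if 2*j+1 = 0 ∨ 2*j+1 = 2*j+1+1-1 then 1 else 2) = 2*j+1 := by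
    have h3 : (2*j+1 = 0 ∨ 2*j+1 = 2*j+1+1-1) := by omega
    rw [if_pos h3]
    omega
  rw [e0, e1]; ring_nf; omega

/-- For an even integer `n ≥ 2`, the eccentric connectivity index of the path
graph `P_n` on `n` vertices equals `(3n² − 6n + 4)/2`. -/
theorem eci_pathGraph_even (n : ℕ) (hn : 2 ≤ n) (hne : Even n) :
    ((SimpleGraph.pathGraph n).eci : ℚ) = (3 * n ^ 2 - 6 * n + 4) / 2 := by
  obtain ⟨k, hk⟩ := hne
  have hk2 : n = 2 * k := by omega
  have hk1 : 1 ≤ k := by omega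
  obtain ⟨n', rfl⟩ : ∃ n', n = n' + 1 := ⟨n - 1, by omega⟩
  have heci : (pathGraph (n'+1)).eci = 6*k^2 - 6*k + 2 := by
    unfold SimpleGraph.eci
    have hterm : ∀ v : Fin (n'+1), (pathGraph (n'+1)).ecc v *
        Nat.card ((pathGraph (n'+1)).neighborSet v) =
        (max v.val (n' - v.val)) * (if v.val = 0 ∨ v.val = n' then 1 else 2) := by
      intro v
      rw [ecc_pathGraph', deg_pathGraph' hn]
      simp only [Nat.add_sub_cancel]
    calc ∑ v : Fin (n'+1), (pathGraph (n'+1)).ecc v *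
          Nat.card ((pathGraph (n'+1)).neighborSet v)
        = ∑ v : Fin (n'+1),
            (max v.val (n' - v.val)) * (if v.val = 0 ∨ v.val = n' then 1 else 2) :=
          Finset.sum_congr rfl (fun v _ => hterm v)
      _ = ∑ i ∈ range (n'+1),
            (max i (n' - i)) * (if i = 0 ∨ i = n' then 1 else 2) :=
          Fin.sum_univ_eq_sum_range
            (fun i => (max i (n' - i)) * (if i = 0 ∨ i = n' then 1 else 2)) (n'+1)
      _ = ∑ i ∈ range (2*k),
            (max i (2*k-1-i)) * (if i = 0 ∨ i = 2*k-1 then 1 else 2) := by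
          rw [← hk2]
          simp only [Nat.add_sub_cancel]
      _ = 6*k^2 - 6*k + 2 := Ssum' k hk1
  rw [heci]
  have hcast : ((6*k^2 - 6*k + 2 : ℕ) : ℚ) = 6*(k:ℚ)^2 - 6*k + 2 := by
    have h6 : 6*k ≤ 6*k^2 := by nlinarith
    push_cast [Nat.sub_add_cancel, h6]
    ring
  rw [hcast]
  have hnq : ((n' : ℚ) + 1) = 2 * k := by exact_mod_cast congrArg (Nat.cast : ℕ → ℚ) hk2
  push_cast
  rw [hnq]
  ring
end

section
/- Let n ≥ 3 be an odd integer and let P_n denote the path graph on n vertices. Then the eccentric connectivity index of P_n equals 3(n − 1)²/2, i.e. ξ^c(P_n) = 3(n − 1)²/2. -/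
open SimpleGraph Finset

private lemma path_walk_len {n : ℕ} {u v : Fin n} (p : (pathGraph n).Walk u v) :
    v.val - u.val ≤ p.length ∧ u.val - v.val ≤ p.length := by
  induction p with
  | nil => simp
  | cons h q ih =>
    rw [pathGraph_adj] at h
    rw [SimpleGraph.Walk.length_cons]
    omega

private lemma path_dist_le {n : ℕ} (k : ℕ) : ∀ (i j : Fin n), i.val + k = j.val →
    (pathGraph n).dist i j ≤ k := by
  induction k with
  | zero => intro i j h; have : i = j := Fin.ext (by omega); simp [this, SimpleGraph.dist_self]
  | succ k ih =>
    intro i j h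
    have hw : i.val + k < n := by omega
    set w : Fin n := ⟨i.val + k, hw⟩ with hwdef
    have hadj : (pathGraph n).Adj w j := by rw [pathGraph_adj]; left; simp [hwdef]; omega
    calc (pathGraph n).dist i j ≤ (pathGraph n).dist i w + (pathGraph n).dist w j := by
          rcases n with _ | n
          · exact absurd i.isLt (Nat.not_lt_zero _)
          · exact (pathGraph_connected n).dist_triangle
      _ ≤ k + 1 := by
          have h1 : (pathGraph n).dist i w ≤ k := ih i w rfl
          have h2 : (pathGraph n).dist w j ≤ 1 := by
            simpa using SimpleGraph.dist_le hadj.toWalk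
          omega

private lemma path_dist {n : ℕ} (i j : Fin n) :
    (pathGraph n).dist i j = max i.val j.val - min i.val j.val := by
  rcases le_total i.val j.val with h | h
  · have h1 : (pathGraph n).dist i j ≤ j.val - i.val := path_dist_le _ i j (by omega)
    have hr : (pathGraph n).Reachable i j := pathGraph_preconnected n i j
    obtain ⟨p, hp⟩ := hr.exists_walk_length_eq_dist
    have := path_walk_len p
    omega
  · rw [SimpleGraph.dist_comm]
    have h1 : (pathGraph n).dist j i ≤ i.val - j.val := path_dist_le _ j i (by omega)
    have hr : (pathGraph n).Reachable j i := pathGraph_preconnected n j i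
    obtain ⟨p, hp⟩ := hr.exists_walk_length_eq_dist
    have := path_walk_len p
    omega

private lemma path_ecc {n : ℕ} (hn : 1 ≤ n) (v : Fin n) :
    (pathGraph n).ecc v = max v.val (n - 1 - v.val) := by
  apply le_antisymm
  · apply Finset.sup_le
    intro u _
    rw [path_dist]
    have := u.isLt; have := v.isLt
    omega
  · have h0 : (pathGraph n).dist v ⟨0, by omega⟩ ≤ (pathGraph n).ecc v :=
      Finset.le_sup (Finset.mem_univ _)
    have h1 : (pathGraph n).dist v ⟨n - 1, by omega⟩ ≤ (pathGraph n).ecc v :=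
      Finset.le_sup (Finset.mem_univ _)
    rw [path_dist] at h0 h1
    have := v.isLt
    simp only at h0 h1
    omega

private lemma path_deg {n : ℕ} (hn : 3 ≤ n) (v : Fin n) :
    Nat.card ((pathGraph n).neighborSet v) = if v.val = 0 ∨ v.val = n - 1 then 1 else 2 := by
  have hv := v.isLt
  split_ifs with h
  · rcases h with h | h
    · have : (pathGraph n).neighborSet v = {(⟨1, by omega⟩ : Fin n)} := by
        ext u
        simp only [mem_neighborSet, pathGraph_adj, Set.mem_singleton_iff, Fin.ext_iff]
        omega
      rw [this, Nat.card_coe_set_eq, Set.ncard_singleton]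
    · have : (pathGraph n).neighborSet v = {(⟨n - 2, by omega⟩ : Fin n)} := by
        ext u
        simp only [mem_neighborSet, pathGraph_adj, Set.mem_singleton_iff, Fin.ext_iff]
        omega
      rw [this, Nat.card_coe_set_eq, Set.ncard_singleton]
  · push_neg at h
    have : (pathGraph n).neighborSet v =
        {(⟨v.val - 1, by omega⟩ : Fin n), (⟨v.val + 1, by omega⟩ : Fin n)} := by
      ext u
      simp only [mem_neighborSet, pathGraph_adj, Set.mem_insert_iff, Set.mem_singleton_iff,
        Fin.ext_iff]
      omega
    rw [this, Nat.card_coe_set_eq,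
      Set.ncard_pair (by simp only [ne_eq, Fin.ext_iff]; omega)]

private lemma gauss_sum_q (k : ℕ) : ∑ i ∈ Finset.range k, (i : ℚ) = k * (k - 1) / 2 := by
  induction k with
  | zero => simp
  | succ k ih => rw [Finset.sum_range_succ, ih]; push_cast; ring

private lemma lin_sum_q (a b : ℚ) (k : ℕ) :
    ∑ i ∈ Finset.range k, (a + b * i) = a * k + b * (k * (k - 1) / 2) := by
  rw [Finset.sum_add_distrib, ← Finset.mul_sum, gauss_sum_q, Finset.sum_const, nsmul_eq_mul,
    Finset.card_range]
  ring

private lemma key_sum (m : ℕ) (hm : 1 ≤ m) :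
    ∑ i ∈ Finset.range (2 * m + 1),
      ((max i (2 * m - i) : ℕ) : ℚ) * (if i = 0 ∨ i = 2 * m then 1 else 2) = 6 * m ^ 2 := by
  rw [Finset.sum_range_succ]
  have h2m : 2 * m = (m + 1) + (m - 1) := by omega
  rw [show Finset.range (2 * m) = Finset.range ((m + 1) + (m - 1)) from by rw [← h2m],
    Finset.sum_range_add, Finset.sum_range_succ']
  have e1 : ∑ i ∈ Finset.range m,
      ((max (i + 1) (2 * m - (i + 1)) : ℕ) : ℚ) * (if i + 1 = 0 ∨ i + 1 = 2 * m then 1 else 2)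
      = ∑ i ∈ Finset.range m, ((4 * m - 2 : ℚ) + (-2) * i) := by
    apply Finset.sum_congr rfl
    intro i hi
    rw [Finset.mem_range] at hi
    have hmax : max (i + 1) (2 * m - (i + 1)) = 2 * m - (i + 1) := by omega
    have hif : ¬(i + 1 = 0 ∨ i + 1 = 2 * m) := by omega
    rw [hmax, if_neg hif, Nat.cast_sub (by omega)]
    push_cast
    ring
  have e2 : ∑ i ∈ Finset.range (m - 1),
      ((max ((m + 1) + i) (2 * m - ((m + 1) + i)) : ℕ) : ℚ) *
        (if (m + 1) + i = 0 ∨ (m + 1) + i = 2 * m then 1 else 2)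
      = ∑ i ∈ Finset.range (m - 1), ((2 * m + 2 : ℚ) + 2 * i) := by
    apply Finset.sum_congr rfl
    intro i hi
    rw [Finset.mem_range] at hi
    have hmax : max ((m + 1) + i) (2 * m - ((m + 1) + i)) = (m + 1) + i := by omega
    have hif : ¬((m + 1) + i = 0 ∨ (m + 1) + i = 2 * m) := by omega
    rw [hmax, if_neg hif]
    push_cast
    ring
  have e0 : ((max 0 (2 * m - 0) : ℕ) : ℚ) * (if (0:ℕ) = 0 ∨ 0 = 2 * m then 1 else 2)
      = 2 * m := by
    have hmx : max 0 (2 * m - 0) = 2 * m := by omega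
    rw [hmx, if_pos (Or.inl rfl)]
    push_cast
    ring
  have e3 : ((max (2 * m) (2 * m - 2 * m) : ℕ) : ℚ) *
      (if 2 * m = 0 ∨ 2 * m = 2 * m then 1 else 2) = 2 * m := by
    rw [if_pos (Or.inr rfl)]
    simp
  rw [e1, e2, e0, e3, lin_sum_q, lin_sum_q]
  have : ((m - 1 : ℕ) : ℚ) = (m : ℚ) - 1 := by
    rw [Nat.cast_sub hm]; simp
  rw [this]
  field_simp
  ring

/-- For an odd integer `n ≥ 3`, the eccentric connectivity index of the path
graph `P_n` on `n` vertices equals `3(n − 1)²/2`. -/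
theorem eci_pathGraph_odd (n : ℕ) (hn : 3 ≤ n) (hno : Odd n) :
    ((SimpleGraph.pathGraph n).eci : ℚ) = 3 * (n - 1) ^ 2 / 2 := by
  obtain ⟨m, hm⟩ := hno
  have hm1 : 1 ≤ m := by omega
  have hterm : ∀ v : Fin n,
      (pathGraph n).ecc v * Nat.card ((pathGraph n).neighborSet v)
        = max v.val (2 * m - v.val) * (if v.val = 0 ∨ v.val = 2 * m then 1 else 2) := by
    intro v
    rw [path_ecc (by omega), path_deg hn, show n - 1 = 2 * m from by omega]
  have hcast : ((SimpleGraph.pathGraph n).eci : ℚ)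
      = ∑ i ∈ Finset.range n,
          ((max i (2 * m - i) : ℕ) : ℚ) * (if i = 0 ∨ i = 2 * m then 1 else 2) := by
    rw [SimpleGraph.eci, Nat.cast_sum,
      ← Fin.sum_univ_eq_sum_range
        (fun i => ((max i (2 * m - i) : ℕ) : ℚ) * (if i = 0 ∨ i = 2 * m then 1 else 2)) n]
    apply Finset.sum_congr rfl
    intro v _
    rw [hterm v]
    push_cast [apply_ite (fun (x : ℕ) => (x : ℚ))]
    ring
  rw [hcast, show n = 2 * m + 1 from by omega, key_sum m hm1]
  push_cast
  ring
end

section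
/- Let d ≥ 2 be an even integer and n ≥ d + 1 an integer. Then the eccentric connectivity index of the volcano graph V_{n,d} equals nd + n + d²/2 − 2d − 1. -/
/-- For even `d`, the volcano graph `V_{n,d}` on vertex set `Fin n`: vertices
`0, 1, …, d` form a path, and each of the remaining `n − d − 1` vertices is
joined to the unique central vertex `d/2` of the path. -/
def volcanoEven (n d : ℕ) : SimpleGraph (Fin n) :=
  SimpleGraph.fromRel fun u v =>
    (u.val + 1 = v.val ∧ v.val ≤ d) ∨ (d < u.val ∧ v.val = d / 2)

open Finset

namespace SimpleGraph

variable {V : Type*} {G : SimpleGraph V}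

theorem Walk.le_add_length_of_forall_adj {f : V → ℕ} (hf : ∀ a b, G.Adj a b → f a ≤ f b + 1)
    {u w : V} (p : G.Walk u w) : f u ≤ f w + p.length := by
  induction p with
  | nil => simp
  | cons h _ ih => grind [Walk.length_cons, hf _ _ h]

theorem exists_walk_length_le_of_exists_adj_lt {f : V → ℕ} {w : V}
    (hf : ∀ u, u ≠ w → ∃ v, G.Adj u v ∧ f v < f u) (u : V) :
    ∃ p : G.Walk u w, p.length ≤ f u := by
  induction hu : f u using Nat.strong_induction_on generalizing u with
  | _ k ih =>
    by_cases huw : u = w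
    · subst huw
      exact ⟨.nil, Nat.zero_le _⟩
    obtain ⟨v, hadj, hlt⟩ := hf u huw
    obtain ⟨p, hp⟩ := ih (f v) (hu ▸ hlt) v rfl
    exact ⟨.cons hadj p, by rw [Walk.length_cons]; omega⟩

theorem dist_eq_of_forall_adj {f : V → ℕ} {w : V} (hw : f w = 0)
    (hle : ∀ a b, G.Adj a b → f a ≤ f b + 1) (hlt : ∀ u, u ≠ w → ∃ v, G.Adj u v ∧ f v < f u)
    (u : V) : G.dist u w = f u := by
  obtain ⟨p, hp⟩ := exists_walk_length_le_of_exists_adj_lt hlt u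
  obtain ⟨q, hq⟩ := Reachable.exists_walk_length_eq_dist ⟨p⟩
  have := q.le_add_length_of_forall_adj hle
  have := dist_le p
  omega

theorem ecc_eq_of_forall_dist_le [Fintype V] {v w : V} {e : ℕ} (hle : ∀ u, G.dist v u ≤ e)
    (hw : G.dist v w = e) : G.ecc v = e :=
  le_antisymm (Finset.sup_le fun u _ => hle u) (hw ▸ Finset.le_sup (Finset.mem_univ w))

theorem card_neighborSet_eq_card {v : V} (s : Finset V) (h : ∀ x, G.Adj v x ↔ x ∈ s) :
    Nat.card (G.neighborSet v) = #s := by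
  rw [show G.neighborSet v = s from Set.ext h, Nat.card_coe_set_eq, Set.ncard_coe_finset]

end SimpleGraph

theorem Fin.card_filter_lt_val {n d : ℕ} : #{x : Fin n | d < x.val} = n - (d + 1) := by
  have := card_filter_add_card_filter_not (s := (univ : Finset (Fin n)))
    (fun x : Fin n => x.val < d + 1)
  simp only [Fin.card_filter_val_lt, card_univ, Fintype.card_fin, not_lt,
    Nat.add_one_le_iff] at this
  omega

theorem sum_range_max_sub (m : ℕ) :
    ∑ k ∈ range (2 * m + 1), max k (2 * m - k) = 3 * m ^ 2 + 2 * m := by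
  induction m with
  | zero => simp
  | succ m ih =>
    -- dropping the two end terms for `m + 1` leaves the terms for `m`, each increased by one
    have hinner : ∑ k ∈ range (2 * m + 1), max (k + 1) (2 * (m + 1) - (k + 1)) =
        ∑ k ∈ range (2 * m + 1), (max k (2 * m - k) + 1) :=
      sum_congr rfl fun k hk => by rw [mem_range] at hk; omega
    rw [show 2 * (m + 1) + 1 = 2 * m + 1 + 1 + 1 by ring, sum_range_succ, sum_range_succ',
      hinner, sum_add_distrib, ih]
    simp only [sum_const, card_range, smul_eq_mul, mul_one]
    rw [max_eq_right (by omega), max_eq_left (by omega), Nat.sub_zero]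
    ring

open SimpleGraph

theorem volcanoEven_adj {n d : ℕ} {u v : Fin n} :
    (volcanoEven n d).Adj u v ↔ u.val ≠ v.val ∧
      ((u.val + 1 = v.val ∧ v.val ≤ d) ∨ (v.val + 1 = u.val ∧ u.val ≤ d) ∨
        (d < u.val ∧ v.val = d / 2) ∨ (d < v.val ∧ u.val = d / 2)) := by
  simp only [volcanoEven, fromRel_adj, ne_eq, Fin.ext_iff]
  tauto

def volcanoFoot (d k : ℕ) : ℕ := if k ≤ d then k else d / 2

def volcanoHeight (d k : ℕ) : ℕ := if k ≤ d then 0 else 1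

def volcanoDist (d a b : ℕ) : ℕ :=
  if a = b then 0
  else ((volcanoFoot d a : ℤ) - volcanoFoot d b).natAbs + volcanoHeight d a + volcanoHeight d b

theorem volcanoEven_dist {n d : ℕ} (u w : Fin n) :
    (volcanoEven n d).dist u w = volcanoDist d u w := by
  refine dist_eq_of_forall_adj (f := fun u : Fin n => volcanoDist d u w) (by simp [volcanoDist])
    (fun a b hab => ?_) (fun u huw => ?_) u
  · rw [volcanoEven_adj] at hab
    simp only [volcanoDist, volcanoFoot, volcanoHeight]
    split_ifs <;> omega
  · have huw : u.val ≠ w.val := Fin.val_ne_of_ne huw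
    have hw := w.isLt
    have hu := u.isLt
    -- a pendant vertex steps to the centre; a path vertex steps towards the foot of `w`,
    -- or onto `w` itself when `w` hangs from it
    by_cases hpend : d < u.val
    · refine ⟨⟨d / 2, by omega⟩, volcanoEven_adj.2 (by dsimp only; omega), ?_⟩
      simp only [volcanoDist, volcanoFoot, volcanoHeight]
      split_ifs <;> omega
    rcases lt_trichotomy (volcanoFoot d w) u.val with hlt | heq | hgt
    · refine ⟨⟨u.val - 1, by omega⟩, volcanoEven_adj.2 (by dsimp only; omega), ?_⟩
      simp only [volcanoDist, volcanoFoot, volcanoHeight] at hlt ⊢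
      split_ifs at hlt ⊢ <;> omega
    · refine ⟨w, volcanoEven_adj.2 ?_, ?_⟩ <;>
      simp only [volcanoDist, volcanoFoot, volcanoHeight] at heq ⊢ <;>
      split_ifs at heq ⊢ <;> omega
    · refine ⟨⟨u.val + 1, ?_⟩, volcanoEven_adj.2 ?_, ?_⟩ <;>
      dsimp only [volcanoDist, volcanoFoot, volcanoHeight] at hgt ⊢ <;>
      split_ifs at hgt ⊢ <;> omega

def volcanoEcc (d k : ℕ) : ℕ := if k ≤ d then max k (d - k) else d / 2 + 1

theorem volcanoEven_ecc {n d : ℕ} (hd2 : 2 ≤ d) (hde : Even d) (hn : d + 1 ≤ n) (v : Fin n) :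
    (volcanoEven n d).ecc v = volcanoEcc d v := by
  obtain ⟨m, rfl⟩ := hde
  obtain ⟨w, hw⟩ : ∃ w : Fin n, w.val = if v.val ≤ m then m + m else 0 :=
    ⟨⟨if v.val ≤ m then m + m else 0, by split_ifs <;> omega⟩, rfl⟩
  refine ecc_eq_of_forall_dist_le (w := w) (fun u => ?_) ?_ <;>
  simp only [volcanoEven_dist, volcanoDist, volcanoEcc, volcanoFoot, volcanoHeight] <;>
  split_ifs at hw ⊢ <;> omega

def volcanoDeg (n d k : ℕ) : ℕ :=
  if d < k then 1
  else (if k = 0 then 0 else 1) + (if k = d then 0 else 1) + if k = d / 2 then n - (d + 1) else 0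

theorem volcanoEven_card_neighborSet {n d : ℕ} (hd2 : 2 ≤ d) (hde : Even d) (hn : d + 1 ≤ n)
    (v : Fin n) : Nat.card ((volcanoEven n d).neighborSet v) = volcanoDeg n d v := by
  obtain ⟨m, rfl⟩ := hde
  have hv := v.isLt
  by_cases hpend : m + m < v.val
  · rw [card_neighborSet_eq_card {⟨m, by omega⟩} fun x => by
      simp only [volcanoEven_adj, mem_singleton, Fin.ext_iff]; omega]
    simp [volcanoDeg, hpend]
  by_cases hcenter : v.val = m
  · rw [card_neighborSet_eq_card (insert ⟨m - 1, by omega⟩ (insert ⟨m + 1, by omega⟩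
      ({x : Fin n | m + m < x.val} : Finset (Fin n)))) fun x => by
        simp only [volcanoEven_adj, mem_insert, mem_filter, mem_univ, true_and, Fin.ext_iff]
        omega]
    rw [card_insert_of_notMem, card_insert_of_notMem, Fin.card_filter_lt_val]
    · simp only [volcanoDeg]; split_ifs <;> omega
    all_goals simp only [mem_insert, mem_filter, mem_univ, true_and, Fin.ext_iff]; omega
  by_cases hleft : v.val = 0
  · rw [card_neighborSet_eq_card {⟨1, by omega⟩} fun x => by
      simp only [volcanoEven_adj, mem_singleton, Fin.ext_iff]; omega]
    simp only [volcanoDeg, card_singleton]; split_ifs <;> omega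
  by_cases hright : v.val = m + m
  · rw [card_neighborSet_eq_card {⟨m + m - 1, by omega⟩} fun x => by
      simp only [volcanoEven_adj, mem_singleton, Fin.ext_iff]; omega]
    simp only [volcanoDeg, card_singleton]; split_ifs <;> omega
  · rw [card_neighborSet_eq_card {⟨v.val - 1, by omega⟩, ⟨v.val + 1, by omega⟩} fun x => by
      simp only [volcanoEven_adj, mem_insert, mem_singleton, Fin.ext_iff]; omega,
      card_pair (by simp [Fin.ext_iff])]
    simp only [volcanoDeg]; split_ifs <;> omega

theorem sum_range_volcanoEcc_mul_volcanoDeg {m X : ℕ} :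
    ∑ k ∈ range (2 * m + 1 + X), volcanoEcc (2 * m) k * volcanoDeg (2 * m + 1 + X) (2 * m) k =
      6 * m ^ 2 + X * (2 * m + 1) := by
  have hhalf : 2 * m / 2 = m := by omega
  have hpendants : ∑ k ∈ Ico (2 * m + 1) (2 * m + 1 + X),
      volcanoEcc (2 * m) k * volcanoDeg (2 * m + 1 + X) (2 * m) k = X * (m + 1) := by
    rw [sum_congr rfl fun k hk => ?_, sum_const, Nat.card_Ico, smul_eq_mul,
      Nat.add_sub_cancel_left]
    rw [mem_Ico] at hk
    simp only [volcanoEcc, volcanoDeg, hhalf]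
    split_ifs <;> omega
  -- a path vertex has degree two, less one at each end, plus `X` pendants at the centre
  have hterm : ∀ k ∈ range (2 * m + 1),
      volcanoEcc (2 * m) k * volcanoDeg (2 * m + 1 + X) (2 * m) k +
        ((if k = 0 then 2 * m else 0) + (if k = 2 * m then 2 * m else 0)) =
      2 * max k (2 * m - k) + (if k = m then m * X else 0) := by
    intro k hk
    rw [mem_range] at hk
    simp only [volcanoEcc, volcanoDeg, hhalf, Nat.add_sub_cancel_left,
      if_pos (show k ≤ 2 * m by omega), if_neg (show ¬ 2 * m < k by omega)]
    by_cases hkm : k = m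
    · subst hkm
      rw [max_eq_left (by omega)]
      rcases Nat.eq_zero_or_pos k with rfl | hk0
      · simp
      · simp only [if_neg hk0.ne', if_neg (show k ≠ 2 * k by omega), if_true]
        ring
    · simp only [if_neg hkm]
      split_ifs <;> omega
  have hpath := sum_congr rfl hterm
  simp only [sum_add_distrib, sum_ite_eq', mem_range, ← mul_sum, sum_range_max_sub,
    show 0 < 2 * m + 1 by omega, show 2 * m < 2 * m + 1 by omega,
    show m < 2 * m + 1 by omega, if_true] at hpath
  rw [← sum_range_add_sum_Ico _ (Nat.le_add_right _ _), hpendants]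
  linarith

/-- For an even integer `d ≥ 2` and `n ≥ d + 1`, the eccentric connectivity
index of the volcano graph `V_{n,d}` equals `nd + n + d²/2 − 2d − 1`. -/
theorem eci_volcano_even (n d : ℕ) (hd2 : 2 ≤ d) (hde : Even d) (hn : d + 1 ≤ n) :
    ((volcanoEven n d).eci : ℚ) = n * d + n + d ^ 2 / 2 - 2 * d - 1 := by
  have hsum : (volcanoEven n d).eci = ∑ k ∈ range n, volcanoEcc d k * volcanoDeg n d k := by
    rw [eci, ← Fin.sum_univ_eq_sum_range (fun k => volcanoEcc d k * volcanoDeg n d k)]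
    refine sum_congr rfl fun v _ => ?_
    rw [volcanoEven_ecc hd2 hde hn, volcanoEven_card_neighborSet hd2 hde hn]
  obtain ⟨m, rfl⟩ := hde
  obtain ⟨X, rfl⟩ := Nat.exists_eq_add_of_le hn
  rw [hsum, ← two_mul, sum_range_volcanoEcc_mul_volcanoDeg]
  push_cast
  ring
end

section
/- Let G be a connected finite simple graph of order n and odd diameter d ≥ 3 such that every spanning tree of G is a caterpillar of diameter d. Then ξ^c(G) ≥ nd + 2n + d²/2 − 3d − 3/2 (which equals ξ^c(V_{n,d}) for a volcano graph V_{n,d}). -/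
open Finset

namespace EciAux

variable {V : Type*} [Fintype V] {G : SimpleGraph V}

omit [Fintype V] in
lemma dist_le_one_of_adj {u v : V} (h : G.Adj u v) : G.dist u v ≤ 1 := by
  simpa using SimpleGraph.dist_le h.toWalk

omit [Fintype V] in
lemma dist_getVert_le (hG : G.Connected) {u v : V} (w : G.Walk u v) (i : ℕ) :
    G.dist u (w.getVert i) ≤ i := by
  induction i with
  | zero => simp [SimpleGraph.Walk.getVert_zero]
  | succ i ih =>
    by_cases hi : i < w.length
    · have hadj := w.adj_getVert_succ hi
      have htri := hG.dist_triangle (u := u) (v := w.getVert i) (w := w.getVert (i+1))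
      have := dist_le_one_of_adj hadj
      omega
    · push_neg at hi
      have h1 : w.getVert (i+1) = v := w.getVert_of_length_le (by omega)
      have h2 : w.getVert i = v := w.getVert_of_length_le hi
      rw [h1]; rw [h2] at ih; omega

omit [Fintype V] in
lemma dist_getVert_le' (hG : G.Connected) {u v : V} (w : G.Walk u v) {i : ℕ}
    (hi : i ≤ w.length) : G.dist (w.getVert i) v ≤ w.length - i := by
  have h1 : w.reverse.getVert (w.length - i) = w.getVert i := by
    rw [SimpleGraph.Walk.getVert_reverse]
    congr 1
    omega
  have := dist_getVert_le hG w.reverse (w.length - i)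
  rw [h1] at this
  rw [SimpleGraph.dist_comm]
  exact this

lemma PSlem (k : ℕ) :
    ∑ j ∈ range (2*k+1), (max (j+1) (2*k - j) + max j (2*k+1 - j)) = 6*k^2+6*k+2 := by
  induction k with
  | zero => decide
  | succ k ih =>
    simp only [show 2*(k+1) = 2*k+2 from by ring]
    rw [Finset.sum_range_succ']
    have hrw : ∀ j ∈ range (2*k+2),
        (max (j+1+1) (2*k+2 - (j+1)) + max (j+1) (2*k+2+1 - (j+1)))
          = (max (j+1) (2*k - j) + max j (2*k+1 - j)) + 2 := by
      intro j hj
      have := mem_range.mp hj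
      omega
    rw [Finset.sum_congr rfl hrw, Finset.sum_add_distrib,
      Finset.sum_const, Finset.sum_range_succ, ih]
    have hsq2 : 6*(k+1)^2 = 6*k^2+12*k+6 := by ring
    simp only [smul_eq_mul, Finset.card_range, hsq2]
    omega

end EciAux

/-- A caterpillar is a tree in which all vertices are within distance one of a
central path. -/
def SimpleGraph.IsCaterpillar {V : Type*} (T : SimpleGraph V) : Prop :=
  T.IsTree ∧ ∃ (k : ℕ) (p : Fin (k + 1) → V), Function.Injective p ∧
    (∀ i : Fin k, T.Adj (p i.castSucc) (p i.succ)) ∧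
    ∀ u : V, ∃ i : Fin (k + 1), T.dist u (p i) ≤ 1

/-- Let `G` be a connected graph of order `n` and odd diameter `d ≥ 3` such
that every spanning tree of `G` is a caterpillar of diameter `d`.  Then
`ξ^c(G) ≥ nd + 2n + d²/2 − 3d − 3/2` (which equals `ξ^c(V_{n,d})`). -/
theorem eci_lower_bound_caterpillar_odd {V : Type*} [Fintype V]
    (G : SimpleGraph V) (hG : G.Connected) (n d : ℕ)
    (hn : Fintype.card V = n) (hdiam : G.diam = d) (hdo : Odd d) (hd3 : 3 ≤ d)
    (hspan : ∀ T : SimpleGraph V, T ≤ G → T.IsTree →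
      T.IsCaterpillar ∧ T.diam = d) :
    (G.eci : ℚ) ≥ n * d + 2 * n + d ^ 2 / 2 - 3 * d - 3 / 2 := by
  classical
  clear hspan
  obtain ⟨k, hk⟩ := hdo
  have hk1 : 1 ≤ k := by omega
  have hVne : Nonempty V := hG.nonempty
  have hdne : G.ediam ≠ ⊤ := SimpleGraph.ediam_ne_top_of_diam_ne_zero (by omega)
  have hdist_le : ∀ u v : V, G.dist u v ≤ d := by
    intro u v
    have := G.dist_le_diam hdne (u := u) (v := v)
    omega
  obtain ⟨a, b, hab⟩ : ∃ a b : V, G.dist a b = d := by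
    obtain ⟨u, v, huv⟩ := G.exists_dist_eq_diam
    exact ⟨u, v, by rw [huv, hdiam]⟩
  -- eccentricity lower bounds
  have hecc : ∀ v u : V, G.dist v u ≤ G.ecc v := fun v u => Finset.le_sup (mem_univ u)
  have heccA : ∀ w : V, G.dist a w ≤ G.ecc w := by
    intro w
    rw [SimpleGraph.dist_comm]
    exact hecc w a
  have heccB : ∀ w : V, G.dist w b ≤ G.ecc w := fun w => hecc w b
  have htriB : ∀ w : V, d ≤ G.dist a w + G.dist w b := by
    intro w
    have := hG.dist_triangle (u := a) (v := w) (w := b)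
    omega
  -- the parent function
  have hparex : ∀ v : V, ∃ u : V, v ≠ a → (G.Adj v u ∧ G.dist a u + 1 = G.dist a v) := by
    intro v
    by_cases hv : v = a
    · exact ⟨v, fun h => absurd hv h⟩
    · obtain ⟨w, hw⟩ := hG.exists_walk_length_eq_dist a v
      have hpos : 0 < G.dist a v := hG.pos_dist_of_ne (Ne.symm hv)
      have hadj : G.Adj (w.getVert (G.dist a v - 1)) v := by
        have hadj0 := w.adj_getVert_succ (i := G.dist a v - 1) (by omega)
        rw [show G.dist a v - 1 + 1 = G.dist a v by omega] at hadj0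
        have hv2 : w.getVert (G.dist a v) = v := by rw [← hw]; exact w.getVert_length
        rw [hv2] at hadj0
        exact hadj0
      refine ⟨w.getVert (G.dist a v - 1), fun _ => ⟨hadj.symm, ?_⟩⟩
      · have h1 : G.dist a (w.getVert (G.dist a v - 1)) ≤ G.dist a v - 1 :=
          EciAux.dist_getVert_le hG w (G.dist a v - 1)
        have h2 := hG.dist_triangle (u := a) (v := w.getVert (G.dist a v - 1)) (w := v)
        have h3 : G.dist (w.getVert (G.dist a v - 1)) v ≤ 1 := EciAux.dist_le_one_of_adj hadj
        omega
  choose par hpar using hparex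
  -- iterated parents of b form a geodesic
  have hiter : ∀ j, j ≤ d → G.dist a (par^[j] b) = d - j := by
    intro j
    induction j with
    | zero => intro _; simpa using hab
    | succ j ih =>
      intro hj
      have hd' := ih (by omega)
      have hne : par^[j] b ≠ a := by
        intro hEq
        rw [hEq] at hd'
        simp [SimpleGraph.dist_self] at hd'
        omega
      have h2 := (hpar _ hne).2
      rw [Function.iterate_succ_apply']
      omega
  set q : ℕ → V := fun i => par^[d - i] b with hq
  have hqdist : ∀ i, i ≤ d → G.dist a (q i) = i := by
    intro i hi
    have := hiter (d - i) (by omega)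
    rw [show d - (d - i) = i by omega] at this
    exact this
  have hpq : ∀ i, 1 ≤ i → i ≤ d → par (q i) = q (i-1) := by
    intro i h1 h2
    show par (par^[d-i] b) = par^[d-(i-1)] b
    rw [← Function.iterate_succ_apply' par (d-i) b]
    congr 1
    omega
  -- the path, as image of `q`
  set A : Finset V := Finset.univ.erase a with hA
  set Path : Finset V := (range d).image (fun j => q (j+1)) with hPath
  set Def : Finset V := A.filter
      (fun w => G.dist a w = k+1 ∧ G.ecc w ≤ k+1 ∧ w ∉ Path) with hDef
  -- the defect dart construction
  have hdart : ∀ w : V, ∃ x y : V, w ∈ Def →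
      (G.Adj x y ∧ par y ≠ x ∧ par x ≠ y ∧ k+1 ≤ G.dist a x ∧
        par^[G.dist a x - (k+1)] x = w) := by
    intro w
    by_cases hw : w ∈ Def
    swap
    · exact ⟨w, w, fun h => absurd h hw⟩
    rw [hDef, mem_filter] at hw
    obtain ⟨hwA, hwl, hwe, hwnP⟩ := hw
    have hwa : w ≠ a := (Finset.mem_erase.mp hwA).1
    have hLub : G.dist w b ≤ k+1 := le_trans (hecc w b) hwe
    have hLlb : k ≤ G.dist w b := by have := htriB w; omega
    obtain ⟨γ, hγ⟩ := hG.exists_walk_length_eq_dist w b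
    set L := G.dist w b with hL
    have hz0 : γ.getVert 0 = w := γ.getVert_zero
    have hzL : γ.getVert L = b := by rw [← hγ]; exact γ.getVert_length
    have hdzw : ∀ i, G.dist w (γ.getVert i) ≤ i := EciAux.dist_getVert_le hG γ
    have hdzb : ∀ i, i ≤ L → G.dist (γ.getVert i) b ≤ L - i := by
      intro i hi
      have := EciAux.dist_getVert_le' hG γ (i := i) (by omega)
      rw [hγ] at this
      exact this
    have hzlow : ∀ i, i ≤ L → d ≤ G.dist a (γ.getVert i) + (L - i) := by
      intro i hi
      have t1 := hG.dist_triangle (u := a) (v := γ.getVert i) (w := b)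
      have t2 := hdzb i hi
      omega
    have hex : ∃ i, 1 ≤ i ∧ i ≤ L ∧ par (γ.getVert i) ≠ γ.getVert (i-1) := by
      by_contra hall
      push_neg at hall
      have hchain : ∀ j, j ≤ L → par^[j] b = γ.getVert (L - j) := by
        intro j
        induction j with
        | zero => intro _; simpa using hzL.symm
        | succ j ih =>
          intro hj
          have hprev := ih (by omega)
          rw [Function.iterate_succ_apply', hprev]
          have heq := hall (L - j) (by omega) (by omega)
          rw [heq]
          congr 1
      have hwb : par^[L] b = w := by
        have := hchain L le_rfl
        rw [Nat.sub_self] at this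
        rw [this, hz0]
      have hLk : L = k := by
        have h5 := hiter L (by omega)
        rw [hwb] at h5
        omega
      have hqw : q (k+1) = w := by
        show par^[d - (k+1)] b = w
        rw [show d - (k+1) = k by omega, ← hLk]
        exact hwb
      exact hwnP (by
        rw [hPath]
        exact mem_image.mpr ⟨k, mem_range.mpr (by omega), hqw⟩)
    set i0 := Nat.find hex with hi0def
    obtain ⟨hi01, hi0L, hibreak⟩ := Nat.find_spec hex
    have hmin : ∀ j, j < i0 → ¬(1 ≤ j ∧ j ≤ L ∧ par (γ.getVert j) ≠ γ.getVert (j-1)) :=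
      fun j hj => Nat.find_min hex hj
    have hpre : ∀ j, j ≤ i0 - 1 →
        G.dist a (γ.getVert j) = k+1+j ∧ par^[j] (γ.getVert j) = w := by
      intro j
      induction j with
      | zero =>
        intro _
        constructor
        · rw [hz0]; exact hwl
        · simpa using hz0
      | succ j ih =>
        intro hj
        obtain ⟨ihd, ihp⟩ := ih (by omega)
        have hQ : par (γ.getVert (j+1)) = γ.getVert j := by
          have hnP := hmin (j+1) (by omega)
          by_contra hne
          exact hnP ⟨by omega, by omega, by
            rw [show j + 1 - 1 = j by omega]
            exact hne⟩
        have hd1 : G.dist a (γ.getVert (j+1)) = k+2+j := by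
          have hne : γ.getVert (j+1) ≠ a := by
            intro hEq
            have h6 := hzlow (j+1) (by omega)
            rw [hEq] at h6
            simp [SimpleGraph.dist_self] at h6
            omega
          have h7 := (hpar _ hne).2
          rw [hQ, ihd] at h7
          omega
        refine ⟨by omega, ?_⟩
        rw [Function.iterate_succ_apply, hQ, ihp]
    obtain ⟨hxd, hxw⟩ := hpre (i0 - 1) le_rfl
    refine ⟨γ.getVert (i0-1), γ.getVert i0, fun _ => ?_⟩
    have hadjxy : G.Adj (γ.getVert (i0-1)) (γ.getVert i0) := by
      have h8 := γ.adj_getVert_succ (i := i0 - 1) (by omega)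
      rw [show i0 - 1 + 1 = i0 by omega] at h8
      exact h8
    have hyd : k + i0 ≤ G.dist a (γ.getVert i0) := by
      have := hzlow i0 hi0L
      omega
    have hxa : γ.getVert (i0-1) ≠ a := by
      intro hEq
      rw [hEq] at hxd
      simp [SimpleGraph.dist_self] at hxd
      omega
    have hpxy : par (γ.getVert (i0-1)) ≠ γ.getVert i0 := by
      intro hEq
      have h9 := (hpar _ hxa).2
      rw [hEq, hxd] at h9
      omega
    refine ⟨hadjxy, hibreak, hpxy, by omega, ?_⟩
    rw [hxd, show k+1+(i0-1) - (k+1) = i0-1 by omega]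
    exact hxw
  choose xf yf hDf using hdart
  -- dart sets
  set F : Finset (V × V) := Finset.univ.filter (fun e => G.Adj e.1 e.2) with hF
  set F1 : Finset (V × V) := A.image (fun w => (w, par w)) with hF1
  set F2 : Finset (V × V) := A.image (fun w => (par w, w)) with hF2
  set F3 : Finset (V × V) := Def.image (fun w => (xf w, yf w)) with hF3
  have hApar : ∀ w ∈ A, G.Adj w (par w) ∧ G.dist a (par w) + 1 = G.dist a w := by
    intro w hw
    exact hpar w (Finset.mem_erase.mp hw).1
  -- `eci` as a dart sum
  have hxi : G.eci = ∑ e ∈ F, G.ecc e.1 := by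
    rw [SimpleGraph.eci,
      ← Finset.sum_fiberwise_of_maps_to (g := Prod.fst) (t := Finset.univ)
        (fun (e : V × V) _ => mem_univ e.1)]
    refine Finset.sum_congr rfl fun v _ => ?_
    have hfib : F.filter (fun e => e.1 = v) = {v} ×ˢ (Finset.univ.filter (fun u => G.Adj v u)) := by
      ext e
      simp only [hF, Finset.mem_filter, Finset.mem_univ, true_and, Finset.mem_product,
        Finset.mem_singleton]
      constructor
      · rintro ⟨hadj, rfl⟩
        exact ⟨rfl, hadj⟩
      · rintro ⟨rfl, hadj⟩
        exact ⟨hadj, rfl⟩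
    have hcardfib : (F.filter (fun e => e.1 = v)).card
        = Nat.card (G.neighborSet v) := by
      rw [hfib, Finset.card_product, Finset.card_singleton, one_mul,
        Nat.card_eq_fintype_card, SimpleGraph.card_neighborSet_eq_degree,
        ← SimpleGraph.neighborFinset_eq_filter]
      rfl
    calc G.ecc v * Nat.card (G.neighborSet v)
        = ∑ _e ∈ F.filter (fun e => e.1 = v), G.ecc v := by
          rw [Finset.sum_const, smul_eq_mul, hcardfib, mul_comm]
      _ = ∑ e ∈ F.filter (fun e => e.1 = v), G.ecc e.1 := by
          refine Finset.sum_congr rfl fun e he => ?_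
          rw [(Finset.mem_filter.mp he).2]
  -- the chosen darts all lie in `F`
  have hsub : F1 ∪ F2 ∪ F3 ⊆ F := by
    intro e he
    rw [hF, Finset.mem_filter]
    refine ⟨mem_univ e, ?_⟩
    rcases Finset.mem_union.mp he with he' | he'
    · rcases Finset.mem_union.mp he' with h1 | h1
      · obtain ⟨w, hw, rfl⟩ := Finset.mem_image.mp h1
        exact (hApar w hw).1
      · obtain ⟨w, hw, rfl⟩ := Finset.mem_image.mp h1
        exact (hApar w hw).1.symm
    · obtain ⟨w, hw, rfl⟩ := Finset.mem_image.mp he'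
      exact (hDf w hw).1
  have hd12 : Disjoint F1 F2 := by
    rw [Finset.disjoint_left]
    rintro e h1 h2
    obtain ⟨w, hw, rfl⟩ := Finset.mem_image.mp h1
    obtain ⟨u, hu, heq⟩ := Finset.mem_image.mp h2
    have e1 : par u = w := congrArg Prod.fst heq
    have e2 : u = par w := congrArg Prod.snd heq
    have h3 := (hApar w hw).2
    have h4 := (hApar u hu).2
    rw [e1] at h4
    rw [← e2] at h3
    omega
  have hd123 : Disjoint (F1 ∪ F2) F3 := by
    rw [Finset.disjoint_left]
    rintro e h1 h3
    obtain ⟨w, hw, heq3⟩ := Finset.mem_image.mp h3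
    obtain ⟨-, hne1, hne2, -, -⟩ := hDf w hw
    rcases Finset.mem_union.mp h1 with h2 | h2
    · obtain ⟨u, hu, heq⟩ := Finset.mem_image.mp h2
      rw [← heq3] at heq
      have e1 : u = xf w := congrArg Prod.fst heq
      have e2 : par u = yf w := congrArg Prod.snd heq
      rw [e1] at e2
      exact hne2 e2
    · obtain ⟨u, hu, heq⟩ := Finset.mem_image.mp h2
      rw [← heq3] at heq
      have e1 : par u = xf w := congrArg Prod.fst heq
      have e2 : u = yf w := congrArg Prod.snd heq
      rw [e2] at e1
      exact hne1 e1
  -- sums over the three families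
  have hS1 : ∑ e ∈ F1, G.ecc e.1 = ∑ w ∈ A, G.ecc w := by
    rw [hF1, Finset.sum_image]
    intro x _ y _ hxy
    exact congrArg Prod.fst hxy
  have hS2 : ∑ e ∈ F2, G.ecc e.1 = ∑ w ∈ A, G.ecc (par w) := by
    rw [hF2, Finset.sum_image]
    intro x _ y _ hxy
    exact congrArg Prod.snd hxy
  have hS3 : ∑ e ∈ F3, G.ecc e.1 = ∑ w ∈ Def, G.ecc (xf w) := by
    rw [hF3, Finset.sum_image]
    intro x hx y hy hxy
    obtain ⟨-, -, -, -, hrecx⟩ := hDf x hx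
    obtain ⟨-, -, -, -, hrecy⟩ := hDf y hy
    have e1 : xf x = xf y := congrArg Prod.fst hxy
    rw [← hrecx, ← hrecy, e1]
  have hS3' : Def.card ≤ ∑ e ∈ F3, G.ecc e.1 := by
    rw [hS3]
    have : ∀ w ∈ Def, 1 ≤ G.ecc (xf w) := by
      intro w hw
      obtain ⟨-, -, -, hge, -⟩ := hDf w hw
      have := heccA (xf w)
      omega
    calc Def.card = ∑ _w ∈ Def, 1 := by rw [Finset.sum_const, smul_eq_mul, mul_one]
      _ ≤ ∑ w ∈ Def, G.ecc (xf w) := Finset.sum_le_sum this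
  -- main estimate
  have hmain : ∑ w ∈ A, G.ecc w + ∑ w ∈ A, G.ecc (par w) + Def.card ≤ G.eci := by
    rw [hxi]
    calc ∑ w ∈ A, G.ecc w + ∑ w ∈ A, G.ecc (par w) + Def.card
        ≤ ∑ e ∈ F1, G.ecc e.1 + ∑ e ∈ F2, G.ecc e.1 + ∑ e ∈ F3, G.ecc e.1 := by
          rw [hS1, hS2]
          omega
      _ = ∑ e ∈ F1 ∪ F2 ∪ F3, G.ecc e.1 := by
          rw [Finset.sum_union hd123, Finset.sum_union hd12]
      _ ≤ ∑ e ∈ F, G.ecc e.1 := Finset.sum_le_sum_of_subset hsub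
  -- indicator sum
  have hDsubA : Def ⊆ A := Finset.filter_subset _ _
  have hTsum : ∑ w ∈ A, (G.ecc w + G.ecc (par w) + (if w ∈ Def then 1 else 0)) ≤ G.eci := by
    have hind : ∑ w ∈ A, (if w ∈ Def then (1:ℕ) else 0) = Def.card := by
      rw [Finset.sum_ite_mem, Finset.inter_eq_right.mpr hDsubA]
      simp
    rw [Finset.sum_add_distrib, Finset.sum_add_distrib, hind]
    exact hmain
  -- cardinalities
  have hn1 : 1 ≤ n := by rw [← hn]; exact Fintype.card_pos
  have hcardA : A.card + 1 = n := by
    rw [hA, Finset.card_erase_of_mem (mem_univ a), Finset.card_univ, hn]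
    omega
  have hqA : ∀ j, j < d → q (j+1) ∈ A := by
    intro j hj
    rw [hA, Finset.mem_erase]
    refine ⟨?_, mem_univ _⟩
    intro hEq
    have hd0 := hqdist (j+1) (by omega)
    rw [hEq] at hd0
    simp [SimpleGraph.dist_self] at hd0
  have hPathA : Path ⊆ A := by
    rw [hPath]
    intro w hw
    obtain ⟨j, hj, rfl⟩ := Finset.mem_image.mp hw
    exact hqA j (mem_range.mp hj)
  have hqinj : ∀ x ∈ range d, ∀ y ∈ range d, q (x+1) = q (y+1) → x = y := by
    intro x hx y hy hxy
    have h1 := hqdist (x+1) (by have := mem_range.mp hx; omega)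
    have h2 := hqdist (y+1) (by have := mem_range.mp hy; omega)
    rw [hxy] at h1
    omega
  have hcardPath : Path.card = d := by
    rw [hPath, Finset.card_image_of_injOn hqinj, Finset.card_range]
  -- pointwise bounds
  have hpath_bound : ∀ j ∈ range d,
      max (j+1) (d - (j+1)) + max j (d - j)
        ≤ G.ecc (q (j+1)) + G.ecc (par (q (j+1))) + (if q (j+1) ∈ Def then 1 else 0) := by
    intro j hj
    have hjd := mem_range.mp hj
    rw [hpq (j+1) (by omega) (by omega), show j + 1 - 1 = j by omega]
    have d1 := hqdist (j+1) (by omega)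
    have d2 := hqdist j (by omega)
    have e1 := heccA (q (j+1))
    have e2 := heccB (q (j+1))
    have e3 := htriB (q (j+1))
    have e4 := heccA (q j)
    have e5 := heccB (q j)
    have e6 := htriB (q j)
    have h10 : max (j+1) (d - (j+1)) + max j (d - j) ≤ G.ecc (q (j+1)) + G.ecc (q j) := by
      omega
    exact le_trans h10 (Nat.le_add_right _ _)
  have hoff_bound : ∀ w ∈ A \ Path,
      2*k+3 ≤ G.ecc w + G.ecc (par w) + (if w ∈ Def then 1 else 0) := by
    intro w hw
    obtain ⟨hwA, hwnP⟩ := Finset.mem_sdiff.mp hw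
    have hwa : w ≠ a := (Finset.mem_erase.mp (hA ▸ hwA)).1
    have hl1 : 0 < G.dist a w := hG.pos_dist_of_ne (Ne.symm hwa)
    have hl2 : G.dist a w ≤ d := hdist_le a w
    have hp1 := (hApar w hwA).2
    have e1 := heccA w
    have e2 := heccB w
    have e3 := htriB w
    have e4 := heccA (par w)
    have e5 := heccB (par w)
    have e6 := htriB (par w)
    by_cases hdef : w ∈ Def
    · rw [if_pos hdef]
      have hdef' := hdef
      rw [hDef, Finset.mem_filter] at hdef'
      obtain ⟨-, hll, -, -⟩ := hdef'
      omega
    · have hcase : ¬(G.dist a w = k+1 ∧ G.ecc w ≤ k+1) := by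
        intro hc
        exact hdef (by rw [hDef, Finset.mem_filter]; exact ⟨hwA, hc.1, hc.2, hwnP⟩)
      have h10 : 2*k+3 ≤ G.ecc w + G.ecc (par w) := by
        by_cases hll : G.dist a w = k+1
        · have hee : k+2 ≤ G.ecc w := by
            by_contra hco
            push_neg at hco
            exact hcase ⟨hll, by omega⟩
          omega
        · omega
      exact le_trans h10 (Nat.le_add_right _ _)
  -- assembling the sums
  have hsplit : ∑ w ∈ A \ Path, (G.ecc w + G.ecc (par w) + (if w ∈ Def then 1 else 0))
      + ∑ w ∈ Path, (G.ecc w + G.ecc (par w) + (if w ∈ Def then 1 else 0))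
      = ∑ w ∈ A, (G.ecc w + G.ecc (par w) + (if w ∈ Def then 1 else 0)) :=
    Finset.sum_sdiff hPathA
  have hPsum : ∑ j ∈ range d, (max (j+1) (d - (j+1)) + max j (d - j))
      ≤ ∑ w ∈ Path, (G.ecc w + G.ecc (par w) + (if w ∈ Def then 1 else 0)) := by
    rw [hPath, Finset.sum_image hqinj]
    exact Finset.sum_le_sum hpath_bound
  have hPS : ∑ j ∈ range d, (max (j+1) (d - (j+1)) + max j (d - j)) = 6*k^2+6*k+2 := by
    rw [← EciAux.PSlem k]
    refine Finset.sum_congr (by rw [hk]) fun j hj => ?_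
    have := mem_range.mp hj
    omega
  have hoff_sum : (2*k+3) * (A \ Path).card
      ≤ ∑ w ∈ A \ Path, (G.ecc w + G.ecc (par w) + (if w ∈ Def then 1 else 0)) := by
    calc (2*k+3) * (A \ Path).card = ∑ _w ∈ A \ Path, (2*k+3) := by
          rw [Finset.sum_const, smul_eq_mul, mul_comm]
      _ ≤ _ := Finset.sum_le_sum hoff_bound
  have hcard_sdiff : (A \ Path).card = A.card - d := by
    rw [Finset.card_sdiff_of_subset hPathA, hcardPath]
  have hdlecardA : d ≤ A.card := by
    have := Finset.card_le_card hPathA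
    omega
  have hfin : 6*k^2+6*k+2 + (2*k+3) * (A.card - d) ≤ G.eci := by
    calc 6*k^2+6*k+2 + (2*k+3) * (A.card - d)
        = ∑ j ∈ range d, (max (j+1) (d - (j+1)) + max j (d - j))
          + (2*k+3) * (A \ Path).card := by rw [hPS, hcard_sdiff]
      _ ≤ ∑ w ∈ Path, (G.ecc w + G.ecc (par w) + (if w ∈ Def then 1 else 0))
          + ∑ w ∈ A \ Path, (G.ecc w + G.ecc (par w) + (if w ∈ Def then 1 else 0)) :=
            add_le_add hPsum hoff_sum
      _ = ∑ w ∈ A, (G.ecc w + G.ecc (par w) + (if w ∈ Def then 1 else 0)) := by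
            rw [add_comm]; exact hsplit
      _ ≤ G.eci := hTsum
  -- final rational computation
  have hnm : n = (A.card - d) + 2*k + 2 := by omega
  have hQc : ((6*k^2+6*k+2 + (2*k+3)*(A.card - d) : ℕ) : ℚ) ≤ (G.eci : ℚ) :=
    Nat.cast_le.mpr hfin
  rw [ge_iff_le]
  have hrhs : (n : ℚ) * d + 2*n + (d:ℚ)^2/2 - 3*d - 3/2
      = ((6*k^2+6*k+2 + (2*k+3)*(A.card - d) : ℕ) : ℚ) := by
    have h1 : (n:ℚ) = ((A.card - d : ℕ) : ℚ) + 2*(k:ℚ) + 2 := by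
      exact_mod_cast congrArg (Nat.cast : ℕ → ℚ) hnm
    have h2 : (d:ℚ) = 2*(k:ℚ)+1 := by
      exact_mod_cast congrArg (Nat.cast : ℕ → ℚ) hk
    rw [h1, h2]
    push_cast
    ring
  rw [hrhs]
  exact hQc
end

section
/- Let G be a connected finite simple graph of diameter d ≥ 2, and let H = G − v be the connected induced subgraph of G obtained by deleting a single vertex v of G, where H also has diameter d. Then Σ_{u ∈ V(G)} ε_G(u)·d_G(u) ≥ Σ_{u ∈ V(H)} ε_G(u)·d_H(u) + ⌈d/2⌉ + (⌈d/2⌉ + 1). -/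
open Finset

/-- Let `G` be a connected graph of diameter `d ≥ 2` and let `H = G − v` be the
induced subgraph obtained by deleting a single vertex `v`, assumed connected
with diameter `d`.  Then
`∑_{u ∈ V(G)} ε_G(u)·d_G(u) ≥ ∑_{u ∈ V(H)} ε_G(u)·d_H(u) + ⌈d/2⌉ + (⌈d/2⌉ + 1)`,
so in particular `ξ^c(G) ≥ ξ^c(H) + 2⌈d/2⌉ + 1` when eccentricities of the
vertices of `H` are computed as in `G`. -/
theorem eci_delete_vertex {V : Type*} [Fintype V] [DecidableEq V]
    (G : SimpleGraph V) (hG : G.Connected) (d : ℕ) (hd : 2 ≤ d) (hdiam : G.diam = d)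
    (v : V) (H : SimpleGraph {u : V // u ≠ v})
    (hH : H = SimpleGraph.comap Subtype.val G)
    (hHconn : H.Connected) (hHdiam : H.diam = d) :
    ∑ u : V, G.ecc u * Nat.card (G.neighborSet u) ≥
      (∑ u : {u : V // u ≠ v}, G.ecc u.val * Nat.card (H.neighborSet u)) +
        (d + 1) / 2 + ((d + 1) / 2 + 1) := by
  classical
  have hne : Nonempty V := hG.nonempty
  set k : ℕ := (d + 1) / 2 with hk
  obtain ⟨x, y, hxy⟩ := SimpleGraph.exists_dist_eq_diam (G := G)
  rw [hdiam] at hxy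
  -- eccentricity lower bound
  have hecc : ∀ u : V, k ≤ G.ecc u := by
    intro u
    have h1 : G.dist u x ≤ G.ecc u := Finset.le_sup (mem_univ x)
    have h2 : G.dist u y ≤ G.ecc u := Finset.le_sup (mem_univ y)
    have ht : G.dist x y ≤ G.dist x u + G.dist u y := hG.dist_triangle
    have c1 : G.dist x u = G.dist u x := SimpleGraph.dist_comm
    omega
  -- the "deleted-neighborhood" degree function
  set F : V → ℕ := fun u => (G.neighborSet u \ {v}).ncard with hF
  -- H-degrees equal F
  have hHdeg : ∀ u : {u : V // u ≠ v}, Nat.card (H.neighborSet u) = F u.val := by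
    intro u
    have himg : Subtype.val '' (H.neighborSet u) = G.neighborSet u.val \ {v} := by
      ext z
      simp only [Set.mem_image, SimpleGraph.mem_neighborSet, hH, SimpleGraph.comap_adj,
        Set.mem_diff, Set.mem_singleton_iff]
      constructor
      · rintro ⟨⟨w, hw⟩, ha, rfl⟩; exact ⟨ha, hw⟩
      · rintro ⟨ha, hz⟩; exact ⟨⟨z, hz⟩, ha, rfl⟩
    show Nat.card (H.neighborSet u) = (G.neighborSet u.val \ {v}).ncard
    rw [← himg, Set.ncard_image_of_injective _ Subtype.val_injective, Nat.card_coe_set_eq]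
  -- G-degree decomposition
  have hGdeg : ∀ u : V,
      Nat.card (G.neighborSet u) = F u + (if G.Adj u v then 1 else 0) := by
    intro u
    show Nat.card (G.neighborSet u) = (G.neighborSet u \ {v}).ncard + _
    rw [Nat.card_coe_set_eq]
    by_cases hadj : G.Adj u v
    · simp only [hadj, if_true]
      rw [Set.ncard_diff_singleton_add_one (by exact hadj) (Set.toFinite _)]
    · simp only [hadj, if_false]
      rw [Set.diff_singleton_eq_self (by simpa using hadj), add_zero]
  -- split the big sum
  have hsplit : ∑ u : V, G.ecc u * Nat.card (G.neighborSet u)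
      = G.ecc v * Nat.card (G.neighborSet v)
        + ∑ u ∈ univ.erase v, G.ecc u * Nat.card (G.neighborSet u) :=
    (Finset.add_sum_erase _ _ (mem_univ v)).symm
  -- rewrite subtype sum
  have hsub : (∑ u : {u : V // u ≠ v}, G.ecc u.val * Nat.card (H.neighborSet u))
      = ∑ u ∈ univ.erase v, G.ecc u * F u := by
    rw [show (∑ u : {u : V // u ≠ v}, G.ecc u.val * Nat.card (H.neighborSet u))
        = ∑ u : {u : V // u ≠ v}, G.ecc u.val * F u.val from
      Finset.sum_congr rfl fun u _ => by rw [hHdeg]]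
    refine (Finset.sum_subtype (p := fun u : V => u ≠ v) (univ.erase v) ?_
      (fun u => G.ecc u * F u)).symm
    intro u; simp
  -- the neighbor filter set
  set N : Finset V := univ.filter (fun u => G.Adj u v) with hN
  have hNerase : N = (univ.erase v).filter (fun u => G.Adj u v) := by
    ext w
    simp only [hN, mem_filter, mem_erase, mem_univ, true_and, and_true]
    exact ⟨fun h => ⟨G.ne_of_adj h, h⟩, fun h => h.2⟩
  have hNcard : N.card = Nat.card (G.neighborSet v) := by
    rw [Nat.card_coe_set_eq, Set.ncard_eq_toFinset_card']
    congr 1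
    ext w
    simp [hN, SimpleGraph.adj_comm]
  -- decompose the erase-sum
  have hdecomp : ∑ u ∈ univ.erase v, G.ecc u * Nat.card (G.neighborSet u)
      = (∑ u ∈ univ.erase v, G.ecc u * F u) + ∑ u ∈ N, G.ecc u := by
    rw [hNerase, Finset.sum_filter, ← Finset.sum_add_distrib]
    refine Finset.sum_congr rfl fun u _ => ?_
    rw [hGdeg u, Nat.mul_add]
    congr 1
    by_cases hadj : G.Adj u v <;> simp [hadj]
  -- degree of v is positive
  have hdvpos : 0 < Nat.card (G.neighborSet v) := by
    have hxyne : x ≠ y := by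
      intro h; rw [h] at hxy; simp [SimpleGraph.dist_self] at hxy; omega
    have hu : ∃ u : V, u ≠ v := by
      by_cases hx' : x = v
      · exact ⟨y, fun h => hxyne (hx'.trans h.symm)⟩
      · exact ⟨x, hx'⟩
    obtain ⟨u, hu⟩ := hu
    obtain ⟨p⟩ := hG.preconnected v u
    have : (G.neighborSet v).Nonempty := by
      cases p with
      | nil => exact absurd rfl hu.symm
      | cons h q => exact ⟨_, h⟩
    rw [Nat.card_coe_set_eq]
    exact (Set.ncard_pos (Set.toFinite _)).mpr this
  -- sum over N lower bound
  have hNsum : N.card * k ≤ ∑ u ∈ N, G.ecc u := by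
    simpa using Finset.card_nsmul_le_sum N _ k (fun u _ => hecc u)
  -- key: pendant case
  have hkey : G.ecc v * Nat.card (G.neighborSet v) + ∑ u ∈ N, G.ecc u ≥ 2 * k + 1 := by
    have hk1 : 1 ≤ k := by omega
    rcases Nat.lt_or_ge (Nat.card (G.neighborSet v)) 2 with hdv | hdv
    · -- degree 1
      have hdv1 : Nat.card (G.neighborSet v) = 1 := by omega
      have heccv : k + 1 ≤ G.ecc v := by
        by_cases hxv : x = v
        · have h1 : G.dist v y ≤ G.ecc v := Finset.le_sup (mem_univ y)
          rw [hxv] at hxy; omega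
        by_cases hyv : y = v
        · have h1 : G.dist v x ≤ G.ecc v := Finset.le_sup (mem_univ x)
          rw [hyv, SimpleGraph.dist_comm] at hxy; omega
        -- v is a pendant vertex with unique neighbor w
        obtain ⟨w, hw⟩ := Set.ncard_eq_one.mp
          (by rw [← Nat.card_coe_set_eq]; exact hdv1)
        have key : ∀ z : V, z ≠ v → G.dist w z + 1 ≤ G.dist v z := by
          intro z hz
          have hd0 : G.dist v z ≠ 0 := (hG.pos_dist_of_ne (Ne.symm hz)).ne'
          obtain ⟨p, hp⟩ := SimpleGraph.exists_walk_of_dist_ne_zero hd0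
          cases p with
          | nil => exact absurd rfl hz
          | cons h q =>
            rename_i w'
            have hw' : w' = w := by
              have hmem : w' ∈ G.neighborSet v := h
              rw [hw] at hmem; exact hmem
            subst hw'
            have hq := SimpleGraph.dist_le q
            simp only [SimpleGraph.Walk.length_cons] at hp
            omega
        have ht : G.dist x y ≤ G.dist x w + G.dist w y := hG.dist_triangle
        have c1 : G.dist x w = G.dist w x := SimpleGraph.dist_comm
        have h1 : G.dist v x ≤ G.ecc v := Finset.le_sup (mem_univ x)
        have h2 : G.dist v y ≤ G.ecc v := Finset.le_sup (mem_univ y)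
        have k1 := key x hxv
        have k2 := key y hyv
        omega
      have hNs := hNsum
      rw [hNcard, hdv1] at hNs
      have hN1 : G.ecc v * Nat.card (G.neighborSet v) = G.ecc v := by
        rw [hdv1, Nat.mul_one]
      omega
    · -- degree ≥ 2
      have h1 : 2 * k ≤ N.card * k := Nat.mul_le_mul_right k (by omega)
      have h2 : 1 ≤ G.ecc v * Nat.card (G.neighborSet v) :=
        Nat.one_le_iff_ne_zero.mpr (Nat.mul_ne_zero (by have := hecc v; omega) (by omega))
      omega
  rw [hsplit, hdecomp, hsub]
  omega
end

section
/- Let G be a connected finite simple graph of order n and even diameter d ≥ 4. Then ξ^c(G) ≥ nd + n + d²/2 − 2d − 1; equivalently, ξ^c(G) ≥ ξ^c(V_{n,d}) where V_{n,d} is the volcano graph of order n and diameter d. -/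
/-!
Let `x, y` be vertices at distance `d` and give every vertex `v ≠ x` a parent `p v`, a neighbour one
step closer to `x`. The edges `{p v, v}` are pairwise distinct, so `ξ^c(G) = ∑ ε(v) d(v)` is at
least `∑_{v ≠ x} (ε(p v) + ε(v))`. By the triangle inequality through `x` and `y`, a vertex at
distance `k` from `x` has `ε ≥ max k (d - k)`, so every term is at least `d + 1`. Each of the `d`
distances `1, …, d` is attained; for one vertex per distance the terms add up to at least
`3d²/2`, and the remaining `n - 1 - d` vertices give at least `(n - 1 - d)(d + 1)`.
-/

open Finset

theorem Finset.sum_add_card_mul_le_of_surjOn {ι κ : Type*} [DecidableEq κ] {s : Finset ι}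
    {t : Finset κ} {ℓ : ι → κ} (φ : κ → ℕ) {c : ℕ} (hmaps : ∀ i ∈ s, ℓ i ∈ t)
    (hsurj : ∀ k ∈ t, ∃ i ∈ s, ℓ i = k) (hc : ∀ k ∈ t, c ≤ φ k) :
    ∑ k ∈ t, φ k + #s * c ≤ ∑ i ∈ s, φ (ℓ i) + #t * c := by
  have hfiber : ∀ k ∈ t, φ k + #{i ∈ s | ℓ i = k} * c ≤ #{i ∈ s | ℓ i = k} * φ k + c := by
    intro k hk
    obtain ⟨i, hi, rfl⟩ := hsurj k hk
    obtain ⟨b, hb⟩ : ∃ b, #{j ∈ s | ℓ j = ℓ i} = b + 1 :=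
      Nat.exists_eq_add_one.2 (card_pos.2 ⟨i, mem_filter.2 ⟨hi, rfl⟩⟩)
    rw [hb]
    nlinarith [hc _ hk]
  calc ∑ k ∈ t, φ k + #s * c = ∑ k ∈ t, (φ k + #{i ∈ s | ℓ i = k} * c) := by
        rw [card_eq_sum_card_fiberwise hmaps, sum_mul, sum_add_distrib]
    _ ≤ ∑ k ∈ t, (#{i ∈ s | ℓ i = k} * φ k + c) := sum_le_sum hfiber
    _ = ∑ i ∈ s, φ (ℓ i) + #t * c := by
        simp only [sum_add_distrib, sum_const, smul_eq_mul, ← sum_fiberwise_of_maps_to' hmaps φ]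

theorem three_mul_sq_le_two_mul_sum_max (d : ℕ) :
    3 * d ^ 2 ≤ 2 * ∑ k ∈ range d, (max k (d - k) + max (k + 1) (d - (k + 1))) := by
  induction d using Nat.twoStepInduction with
  | zero => simp
  | one => simp
  | more d ih _ =>
    -- Going from `d` to `d + 2` raises each inner term by `2` and adds two outer terms `2d + 3`.
    have hshift : ∀ k ∈ range d,
        max (k + 1) (d + 2 - (k + 1)) + max (k + 1 + 1) (d + 2 - (k + 1 + 1))
          = max k (d - k) + max (k + 1) (d - (k + 1)) + 2 := fun k hk => by
      have := mem_range.1 hk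
      omega
    have hends : max 0 (d + 2) + max 1 (d + 2 - 1) +
        (max (d + 1) (d + 2 - (d + 1)) + max (d + 1 + 1) (d + 2 - (d + 1 + 1))) = 4 * d + 6 := by
      omega
    rw [sum_range_succ, sum_range_succ', sum_congr rfl hshift, sum_add_distrib, sum_const,
      card_range, smul_eq_mul]
    simp only [Nat.sub_zero, zero_add]
    nlinarith

namespace SimpleGraph

variable {V : Type*} {G : SimpleGraph V}

theorem Connected.exists_adj_dist_add_one_eq (hG : G.Connected) {x v : V} (hv : v ≠ x) :
    ∃ u, G.Adj u v ∧ G.dist x u + 1 = G.dist x v := by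
  obtain ⟨p, hp⟩ := hG.exists_walk_length_eq_dist v x
  cases p with
  | nil => exact absurd rfl hv
  | @cons _ u _ hadj q =>
    refine ⟨u, hadj.symm, ?_⟩
    have hq : G.dist u x ≤ q.length := dist_le q
    have htri : G.dist v x ≤ G.dist v u + G.dist u x := hG.dist_triangle
    rw [dist_eq_one_iff_adj.2 hadj] at htri
    rw [Walk.length_cons] at hp
    rw [dist_comm, G.dist_comm (u := x)]
    omega

theorem Connected.exists_dist_eq_of_le (hG : G.Connected) {x y : V} {k : ℕ}
    (hk : k ≤ G.dist x y) : ∃ u, G.dist x u = k := by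
  obtain ⟨m, hm⟩ := Nat.exists_eq_add_of_le hk
  clear hk
  induction m generalizing y with
  | zero => exact ⟨y, hm⟩
  | succ m ih =>
    have hy : y ≠ x := by rintro rfl; simp at hm
    obtain ⟨u, -, hu⟩ := hG.exists_adj_dist_add_one_eq hy
    exact ih (y := u) (by omega)

theorem Connected.exists_bfs_parent (hG : G.Connected) (x : V) :
    ∃ p : V → V, ∀ v ≠ x, G.Adj (p v) v ∧ G.dist x (p v) + 1 = G.dist x v := by
  choose! p hp using fun v (hv : v ≠ x) => hG.exists_adj_dist_add_one_eq hv
  exact ⟨p, hp⟩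

variable [Fintype V]

theorem dist_le_ecc (v u : V) : G.dist v u ≤ G.ecc v :=
  le_sup (f := fun u => G.dist v u) (mem_univ u)

theorem Connected.max_dist_le_ecc (hG : G.Connected) (x y v : V) :
    max (G.dist x v) (G.dist x y - G.dist x v) ≤ G.ecc v := by
  have hx := dist_le_ecc (G := G) v x
  have hy := dist_le_ecc (G := G) v y
  have htri : G.dist x y ≤ G.dist x v + G.dist v y := hG.dist_triangle
  rw [dist_comm] at hx
  omega

theorem Connected.exists_parent_dist_eq [DecidableEq V] (hG : G.Connected) {x : V} {p : V → V}
    (hp : ∀ v ≠ x, G.Adj (p v) v ∧ G.dist x (p v) + 1 = G.dist x v) {y : V} {k : ℕ}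
    (hk : k < G.dist x y) : ∃ v ∈ univ.erase x, G.dist x (p v) = k := by
  obtain ⟨v, hv⟩ := hG.exists_dist_eq_of_le hk
  have hvx : v ≠ x := by rintro rfl; simp at hv
  exact ⟨v, mem_erase.2 ⟨hvx, mem_univ v⟩, by have := (hp v hvx).2; omega⟩

variable [DecidableRel G.Adj]

theorem eci_eq_sum_ecc_mul_degree : G.eci = ∑ v, G.ecc v * G.degree v := by
  simp only [eci, Nat.card_eq_fintype_card, card_neighborSet_eq_degree]

/-- Among the neighbours of `u` are its children `{v ∈ s | p v = u}` and, if `u ∈ s`, its parent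
`p u`, which is not a child because `rank` decreases along `p`. -/
theorem sum_parent_add_le_sum_mul_degree (f : V → ℕ) {s : Finset V} {p : V → V} (rank : V → ℕ)
    (hadj : ∀ v ∈ s, G.Adj (p v) v) (hrank : ∀ v ∈ s, rank (p v) < rank v) :
    ∑ v ∈ s, (f (p v) + f v) ≤ ∑ v, f v * G.degree v := by
  classical
  have hdeg : ∀ u, #{v ∈ s | p v = u} + (if u ∈ s then 1 else 0) ≤ G.degree u := by
    intro u
    have hchildren : {v ∈ s | p v = u} ⊆ G.neighborFinset u := fun v hv => by
      obtain ⟨hvs, rfl⟩ := mem_filter.1 hv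
      exact (mem_neighborFinset _ _ _).2 (hadj v hvs)
    rw [← card_neighborFinset_eq_degree]
    split_ifs with hu
    · have hparent : p u ∉ {v ∈ s | p v = u} := fun hp => by
        obtain ⟨hps, hpp⟩ := mem_filter.1 hp
        have := hrank _ hps
        have := hrank u hu
        rw [hpp] at *
        omega
      rw [← card_insert_of_notMem hparent]
      exact card_le_card (insert_subset ((mem_neighborFinset _ _ _).2 (hadj u hu).symm) hchildren)
    · simpa using card_le_card hchildren
  calc ∑ v ∈ s, (f (p v) + f v)
      = ∑ u, f u * (#{v ∈ s | p v = u} + if u ∈ s then 1 else 0) := by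
        simp only [mul_add, sum_add_distrib, mul_ite, mul_one, mul_zero, sum_ite_mem, univ_inter]
        rw [← sum_fiberwise' s p f]
        simp only [sum_const, smul_eq_mul, mul_comm]
    _ ≤ ∑ u, f u * G.degree u := sum_le_sum fun u _ => Nat.mul_le_mul_left _ (hdeg u)

theorem Connected.sum_parent_max_le_eci [DecidableEq V] (hG : G.Connected) {x : V} {p : V → V}
    (hp : ∀ v ≠ x, G.Adj (p v) v ∧ G.dist x (p v) + 1 = G.dist x v) (y : V) :
    ∑ v ∈ univ.erase x,
      (max (G.dist x (p v)) (G.dist x y - G.dist x (p v)) +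
        max (G.dist x (p v) + 1) (G.dist x y - (G.dist x (p v) + 1))) ≤ G.eci := by
  rw [eci_eq_sum_ecc_mul_degree]
  refine le_trans (sum_le_sum fun v hv => ?_) (sum_parent_add_le_sum_mul_degree G.ecc (G.dist x)
    (fun v hv => (hp v (ne_of_mem_erase hv)).1)
    (fun v hv => Nat.lt_of_succ_le (hp v (ne_of_mem_erase hv)).2.le))
  rw [(hp v (ne_of_mem_erase hv)).2]
  exact Nat.add_le_add (hG.max_dist_le_ecc x y (p v)) (hG.max_dist_le_ecc x y v)

end SimpleGraph

open SimpleGraph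

theorem eci_lower_bound_even_general {V : Type*} [Fintype V]
    (G : SimpleGraph V) (hG : G.Connected) (n d : ℕ)
    (hn : Fintype.card V = n) (hdiam : G.diam = d) :
    (G.eci : ℚ) ≥ n * d + n + d ^ 2 / 2 - 2 * d - 1 := by
  classical
  have := hG.nonempty
  obtain ⟨x, y, hxy⟩ := G.exists_dist_eq_diam
  rw [hdiam] at hxy
  obtain ⟨p, hp⟩ := hG.exists_bfs_parent x
  have htree := hG.sum_parent_max_le_eci hp y
  rw [hxy] at htree
  have hlevels := sum_add_card_mul_le_of_surjOn (t := range d) (c := d + 1)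
    (fun k => max k (d - k) + max (k + 1) (d - (k + 1)))
    (fun v hv => by
      have := (hp v (ne_of_mem_erase hv)).2
      have := hdiam ▸ G.dist_le_diam (G.connected_iff_ediam_ne_top.1 hG) (u := x) (v := v)
      rw [mem_range]; omega)
    (fun k hk => hG.exists_parent_dist_eq hp (hxy ▸ mem_range.1 hk))
    (fun k hk => by have := mem_range.1 hk; omega)
  have harith := three_mul_sq_le_two_mul_sum_max d
  have hcard : #(univ.erase x) + 1 = n := by rw [card_erase_add_one (mem_univ x), card_univ, hn]
  rw [card_range] at hlevels
  have key : 3 * d ^ 2 + 2 * (#(univ.erase x) * (d + 1)) ≤ 2 * G.eci + 2 * (d * (d + 1)) := by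
    omega
  rw [← hcard]
  qify at key ⊢
  linarith

/-- Let `G` be a connected graph of order `n` and even diameter `d ≥ 4`.  Then
`ξ^c(G) ≥ nd + n + d²/2 − 2d − 1 = ξ^c(V_{n,d})`. -/
theorem eci_lower_bound_even {V : Type*} [Fintype V]
    (G : SimpleGraph V) (hG : G.Connected) (n d : ℕ)
    (hn : Fintype.card V = n) (hdiam : G.diam = d) (hde : Even d) (hd4 : 4 ≤ d) :
    (G.eci : ℚ) ≥ n * d + n + d ^ 2 / 2 - 2 * d - 1 :=
  eci_lower_bound_even_general G hG n d hn hdiam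
end

section
/- Let G be a connected finite simple graph of order n and odd diameter d ≥ 3. Then ξ^c(G) ≥ nd + 2n + d²/2 − 3d − 3/2; equivalently, ξ^c(G) ≥ ξ^c(V_{n,d}) where V_{n,d} is a volcano graph of order n and diameter d. -/
open Finset SimpleGraph

namespace EciOdd

set_option linter.unusedSectionVars false
open scoped Classical

variable {V : Type*} [Fintype V]

/-- `M f g v = max (f v) (g v)`. -/
def MM (f g : V → ℕ) (v : V) : ℕ := max (f v) (g v)

/-- who owns the "dart" (v,u) (worth `M v`). -/
noncomputable def owner (φ ψ : V → V) (v u : V) : Option V :=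
  if u = φ v ∨ u = ψ v then some v
  else if v = φ u ∨ v = ψ u then some u else none

/-- amount allocated to vertex `w`. -/
noncomputable def AA (G : SimpleGraph V) (f g : V → ℕ) (φ ψ : V → V) (w : V) : ℕ :=
  ∑ p ∈ univ ×ˢ univ,
    (if G.Adj p.1 p.2 ∧ owner φ ψ p.1 p.2 = some w then MM f g p.1 else 0)

lemma owner_own (φ ψ : V → V) (v u : V) (h : u = φ v ∨ u = ψ v) :
    owner φ ψ v u = some v := by
  unfold owner; rw [if_pos h]

lemma owner_gift (φ ψ : V → V) (v u : V) (h1 : ¬ (u = φ v ∨ u = ψ v))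
    (h2 : v = φ u ∨ v = ψ u) : owner φ ψ v u = some u := by
  unfold owner; rw [if_neg h1, if_pos h2]

lemma A_ge (G : SimpleGraph V) (f g : V → ℕ) (φ ψ : V → V) (w : V) (S : Finset (V × V))
    (hS : ∀ p ∈ S, G.Adj p.1 p.2 ∧ owner φ ψ p.1 p.2 = some w) :
    ∑ p ∈ S, MM f g p.1 ≤ AA G f g φ ψ w := by
  unfold AA
  calc ∑ p ∈ S, MM f g p.1
      = ∑ p ∈ S, (if G.Adj p.1 p.2 ∧ owner φ ψ p.1 p.2 = some w then MM f g p.1 else 0) := by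
        refine Finset.sum_congr rfl fun p hp => ?_
        rw [if_pos (hS p hp)]
    _ ≤ _ := by
        refine Finset.sum_le_sum_of_subset_of_nonneg ?_ ?_
        · intro p _; simp [Finset.mem_product]
        · intros; positivity

lemma sum_A_le (G : SimpleGraph V) (f g : V → ℕ) (φ ψ : V → V) :
    ∑ w, AA G f g φ ψ w ≤ ∑ v, MM f g v * (univ.filter (G.Adj v)).card := by
  unfold AA
  rw [Finset.sum_comm]
  have step1 : ∀ p : V × V, p ∈ (univ ×ˢ univ : Finset (V × V)) →
      (∑ w, if G.Adj p.1 p.2 ∧ owner φ ψ p.1 p.2 = some w then MM f g p.1 else 0)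
      ≤ (if G.Adj p.1 p.2 then MM f g p.1 else 0) := by
    intro p _
    by_cases hA : G.Adj p.1 p.2
    · simp only [hA, true_and, if_true]
      rcases ho : owner φ ψ p.1 p.2 with _ | w0
      · simp
      · have : (∑ w, if some w0 = some w then MM f g p.1 else 0)
            = ∑ w, if w0 = w then MM f g p.1 else 0 := by
          refine Finset.sum_congr rfl fun w _ => ?_; simp
        rw [this, Finset.sum_ite_eq]
        simp
    · simp [hA]
  refine le_trans (Finset.sum_le_sum step1) (le_of_eq ?_)
  rw [Finset.sum_product]
  refine Finset.sum_congr rfl fun v _ => ?_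
  rw [← Finset.sum_filter]
  simp [Finset.sum_const, mul_comm]

/-- Gauss-type sum: `∑_{j<2r} max j (2r-1-j) + r = 3 r²`. -/
lemma sum_max_eq (r : ℕ) (hr : 1 ≤ r) :
    (∑ j ∈ range (2*r), max j (2*r - 1 - j)) + r = 3 * r^2 := by
  have hsplit : range (2*r) = Finset.Ico 0 r ∪ Finset.Ico r (2*r) := by
    rw [Finset.range_eq_Ico, ← Finset.Ico_union_Ico_eq_Ico (Nat.zero_le r) (by omega)]
  have hdisj : Disjoint (Finset.Ico 0 r) (Finset.Ico r (2*r)) := by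
    apply Finset.Ico_disjoint_Ico_consecutive
  rw [hsplit, Finset.sum_union hdisj]
  have h1 : ∑ j ∈ Finset.Ico 0 r, max j (2*r - 1 - j) = ∑ j ∈ range r, (r + (r - 1 - j)) := by
    rw [← Finset.range_eq_Ico]
    refine Finset.sum_congr rfl fun j hj => ?_
    rw [Finset.mem_range] at hj
    have : max j (2*r-1-j) = 2*r-1-j := by omega
    rw [this]; omega
  have h2 : ∑ j ∈ Finset.Ico r (2*r), max j (2*r - 1 - j) = ∑ j ∈ range r, (r + j) := by
    rw [Finset.sum_Ico_eq_sum_range]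
    have : 2*r - r = r := by omega
    rw [this]
    refine Finset.sum_congr rfl fun j hj => ?_
    rw [Finset.mem_range] at hj
    have : max (r + j) (2*r-1-(r+j)) = r + j := by omega
    rw [this]
  rw [h1, h2]
  have h3 : ∑ j ∈ range r, (r + (r - 1 - j)) = ∑ j ∈ range r, (r + j) := by
    have := Finset.sum_range_reflect (fun j => r + j) r
    calc ∑ j ∈ range r, (r + (r - 1 - j)) = ∑ j ∈ range r, (fun j => r + j) (r - 1 - j) := rfl
      _ = ∑ j ∈ range r, (r + j) := this
  rw [h3, Finset.sum_add_distrib, Finset.sum_const, Finset.card_range, smul_eq_mul]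
  have h4 := Finset.sum_range_id_mul_two r
  have h5 : r * (r-1) + r = r * r := by
    calc r * (r-1) + r = r * ((r-1) + 1) := by ring
      _ = r * r := by rw [Nat.sub_add_cancel hr]
  have h6 : r * r = r ^ 2 := by ring
  set s := ∑ j ∈ range r, j
  nlinarith [h4, h5, h6]


section Key

variable (G : SimpleGraph V) (r d n : ℕ) (f g : V → ℕ) (x y : V) (pth : ℕ → V) (φ ψ : V → V)

theorem key (hr : 2 ≤ r) (hd : d + 1 = 2*r) (hn : Fintype.card V = n)
    (hfg : ∀ v, d ≤ f v + g v)
    (hφa : ∀ v, f v ≠ 0 → G.Adj v (φ v))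
    (hφf : ∀ v, f v ≠ 0 → f (φ v) + 1 = f v)
    (hψa : ∀ v, g v ≠ 0 → G.Adj v (ψ v))
    (hψg : ∀ v, g v ≠ 0 → g (ψ v) + 1 = g v)
    (hpf : ∀ j, j ≤ d → f (pth j) = j)
    (hpg : ∀ j, j ≤ d → g (pth j) = d - j)
    (hpφ : ∀ j, j ≤ d → ∃ i, i ≤ d ∧ φ (pth j) = pth i)
    (hpψ : ∀ j, j ≤ d → ∃ i, i ≤ d ∧ ψ (pth j) = pth i)
    (hx0 : pth 0 = x) (hyd : pth d = y)
    (hfx : ∀ v, f v = 0 → v = x)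
    (hgy : ∀ v, g v = 0 → v = y) :
    2*r ≤ n ∧
    6*r^2 + 2 + (2*r+1) * (n - 2*r) ≤
      (∑ v, MM f g v * (univ.filter (G.Adj v)).card) + 6*r := by
  -- abbreviations
  set A : V → ℕ := AA G f g φ ψ with hA
  have hMeq : ∀ v, MM f g v = max (f v) (g v) := fun v => rfl
  have hMr : ∀ v, r ≤ MM f g v := by
    intro v; have h := hfg v; rw [hMeq]; omega
  -- the path as a finset
  set P : Finset V := (range (d+1)).image pth with hP
  have hPmem : ∀ j, j ≤ d → pth j ∈ P := by
    intro j hj; exact mem_image.mpr ⟨j, mem_range.mpr (by omega), rfl⟩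
  have hxP : x ∈ P := hx0 ▸ hPmem 0 (by omega)
  have hyP : y ∈ P := hyd ▸ hPmem d le_rfl
  have hofff : ∀ v, v ∉ P → f v ≠ 0 := by
    intro v hv h0; exact hv (by rw [hfx v h0]; exact hxP)
  have hoffg : ∀ v, v ∉ P → g v ≠ 0 := by
    intro v hv h0; exact hv (by rw [hgy v h0]; exact hyP)
  have hφne : ∀ v, f v ≠ 0 → φ v ≠ v := by
    intro v h he; have := hφf v h; rw [he] at this; omega
  have hψne : ∀ v, g v ≠ 0 → ψ v ≠ v := by
    intro v h he; have := hψg v h; rw [he] at this; omega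
  -- mutual-edge analysis
  have hmut : ∀ v, v ∉ P → ∀ w : V, (v = φ w ∨ v = ψ w) →
      w ∉ P ∧ ((v = φ w ∧ f v + 1 = f w) ∨ (v = ψ w ∧ g v + 1 = g w)) := by
    intro v hv w hw
    have hwP : w ∉ P := by
      intro hwp
      rcases mem_image.mp hwp with ⟨j, hj, rfl⟩
      rw [mem_range] at hj
      rcases hw with h | h
      · rcases hpφ j (by omega) with ⟨i, hi, he⟩
        exact hv (by rw [h, he]; exact hPmem i hi)
      · rcases hpψ j (by omega) with ⟨i, hi, he⟩
        exact hv (by rw [h, he]; exact hPmem i hi)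
    refine ⟨hwP, ?_⟩
    rcases hw with h | h
    · left
      refine ⟨h, ?_⟩
      have hf := hφf w (hofff w hwP)
      rw [← h] at hf; omega
    · right
      refine ⟨h, ?_⟩
      have hf := hψg w (hoffg w hwP)
      rw [← h] at hf; omega
  -- extraction bounds
  have own1φ : ∀ v, f v ≠ 0 → MM f g v ≤ A v := by
    intro v h1
    have := A_ge G f g φ ψ v {(v, φ v)} ?_
    · simpa using this
    · intro p hp
      rcases Finset.mem_singleton.mp hp with rfl
      exact ⟨hφa v h1, owner_own _ _ _ _ (Or.inl rfl)⟩
  have own1ψ : ∀ v, g v ≠ 0 → MM f g v ≤ A v := by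
    intro v h1
    have := A_ge G f g φ ψ v {(v, ψ v)} ?_
    · simpa using this
    · intro p hp
      rcases Finset.mem_singleton.mp hp with rfl
      exact ⟨hψa v h1, owner_own _ _ _ _ (Or.inr rfl)⟩
  have own2 : ∀ v, f v ≠ 0 → g v ≠ 0 → φ v ≠ ψ v → 2 * MM f g v ≤ A v := by
    intro v h1 h2 hne
    have hs := A_ge G f g φ ψ v {(v, φ v), (v, ψ v)} ?_
    · rw [Finset.sum_insert (by simp [hne]), Finset.sum_singleton] at hs
      simp only [Prod.fst] at hs
      rw [← hA] at hs
      omega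
    · intro p hp
      rcases Finset.mem_insert.mp hp with rfl | hp'
      · exact ⟨hφa v h1, owner_own _ _ _ _ (Or.inl rfl)⟩
      · rcases Finset.mem_singleton.mp hp' with rfl
        exact ⟨hψa v h2, owner_own _ _ _ _ (Or.inr rfl)⟩
  have own2giftf : ∀ v, f v ≠ 0 → g v ≠ 0 → φ v ≠ ψ v →
      ¬(v = φ (φ v) ∨ v = ψ (φ v)) → 2 * MM f g v + MM f g (φ v) ≤ A v := by
    intro v h1 h2 hne hnm
    have hvne := hφne v h1
    have hp2 : (v, ψ v) ∉ ({(φ v, v)} : Finset (V × V)) := by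
      simp only [Finset.mem_singleton, Prod.mk.injEq, not_and]
      intro he _; exact hvne he.symm
    have hp1 : (v, φ v) ∉ ({(v, ψ v), (φ v, v)} : Finset (V × V)) := by
      simp only [Finset.mem_insert, Finset.mem_singleton, Prod.mk.injEq, not_or, not_and]
      refine ⟨fun _ he => hne he, fun he => absurd he.symm hvne⟩
    have hs := A_ge G f g φ ψ v {(v, φ v), (v, ψ v), (φ v, v)} ?_
    · rw [Finset.sum_insert hp1, Finset.sum_insert hp2, Finset.sum_singleton] at hs
      simp only [Prod.fst] at hs
      rw [← hA] at hs
      omega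
    · intro p hp
      simp only [Finset.mem_insert, Finset.mem_singleton] at hp
      rcases hp with rfl | rfl | rfl
      · exact ⟨hφa v h1, owner_own _ _ _ _ (Or.inl rfl)⟩
      · exact ⟨hψa v h2, owner_own _ _ _ _ (Or.inr rfl)⟩
      · exact ⟨(hφa v h1).symm, owner_gift _ _ _ _ hnm (Or.inl rfl)⟩
  have own2giftg : ∀ v, f v ≠ 0 → g v ≠ 0 → φ v ≠ ψ v →
      ¬(v = φ (ψ v) ∨ v = ψ (ψ v)) → 2 * MM f g v + MM f g (ψ v) ≤ A v := by
    intro v h1 h2 hne hnm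
    have hvne := hψne v h2
    have hp2 : (v, ψ v) ∉ ({(ψ v, v)} : Finset (V × V)) := by
      simp only [Finset.mem_singleton, Prod.mk.injEq, not_and]
      intro he _; exact hvne he.symm
    have hp1 : (v, φ v) ∉ ({(v, ψ v), (ψ v, v)} : Finset (V × V)) := by
      simp only [Finset.mem_insert, Finset.mem_singleton, Prod.mk.injEq, not_or, not_and]
      refine ⟨fun _ he => hne he, fun he _ => hψne v h2 he.symm⟩
    have hs := A_ge G f g φ ψ v {(v, φ v), (v, ψ v), (ψ v, v)} ?_
    · rw [Finset.sum_insert hp1, Finset.sum_insert hp2, Finset.sum_singleton] at hs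
      simp only [Prod.fst] at hs
      rw [← hA] at hs
      omega
    · intro p hp
      simp only [Finset.mem_insert, Finset.mem_singleton] at hp
      rcases hp with rfl | rfl | rfl
      · exact ⟨hφa v h1, owner_own _ _ _ _ (Or.inl rfl)⟩
      · exact ⟨hψa v h2, owner_own _ _ _ _ (Or.inr rfl)⟩
      · exact ⟨(hψa v h2).symm, owner_gift _ _ _ _ hnm (Or.inr rfl)⟩
  have joint : ∀ v, f v ≠ 0 → g v ≠ 0 → φ v = ψ v →
      ¬(v = φ (φ v) ∨ v = ψ (φ v)) → MM f g v + MM f g (φ v) ≤ A v := by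
    intro v h1 h2 hj hnm
    have hvne := hφne v h1
    have hp1 : (v, φ v) ∉ ({(φ v, v)} : Finset (V × V)) := by
      simp only [Finset.mem_singleton, Prod.mk.injEq, not_and]
      intro he _; exact hvne he.symm
    have hs := A_ge G f g φ ψ v {(v, φ v), (φ v, v)} ?_
    · rw [Finset.sum_insert hp1, Finset.sum_singleton] at hs
      simp only [Prod.fst] at hs
      rw [← hA] at hs
      omega
    · intro p hp
      simp only [Finset.mem_insert, Finset.mem_singleton] at hp
      rcases hp with rfl | rfl
      · exact ⟨hφa v h1, owner_own _ _ _ _ (Or.inl rfl)⟩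
      · exact ⟨(hφa v h1).symm, owner_gift _ _ _ _ hnm (Or.inl rfl)⟩
  -- the deficiency predicate
  set DEF : V → Prop := fun v => MM f g v = r ∧ (v = φ (φ v) ∨ v = ψ (φ v)) ∧
      (v = φ (ψ v) ∨ v = ψ (ψ v)) with hDEF
  -- main case analysis for off-path vertices
  have hcase : ∀ v, v ∉ P → (2*r + 1 ≤ A v) ∨ (DEF v ∧ 2*r ≤ A v) := by
    intro v hv
    have h1 := hofff v hv
    have h2 := hoffg v hv
    by_cases hj : φ v = ψ v
    · left
      have hfφ := hφf v h1
      have hgψ := hψg v h2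
      rw [← hj] at hgψ
      have hsum : d + 2 ≤ f v + g v := by have := hfg (φ v); omega
      have hMv : r + 1 ≤ MM f g v := by rw [hMeq]; omega
      have hnm : ¬(v = φ (φ v) ∨ v = ψ (φ v)) := by
        intro hm
        rcases hmut v hv (φ v) hm with ⟨hwP, hc⟩
        rcases hc with ⟨_, hfc⟩ | ⟨_, hgc⟩
        · omega
        · omega
      have := joint v h1 h2 hj hnm
      have := hMr (φ v)
      omega
    · by_cases hM : r + 1 ≤ MM f g v
      · left
        have := own2 v h1 h2 hj
        omega
      · have hMv : MM f g v = r := le_antisymm (by omega) (hMr v)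
        by_cases hmf : v = φ (φ v) ∨ v = ψ (φ v)
        · by_cases hmg : v = φ (ψ v) ∨ v = ψ (ψ v)
          · right
            refine ⟨⟨hMv, hmf, hmg⟩, ?_⟩
            have := own2 v h1 h2 hj
            omega
          · left
            have := own2giftg v h1 h2 hj hmg
            have := hMr (ψ v)
            omega
        · left
          have := own2giftf v h1 h2 hj hmf
          have := hMr (φ v)
          omega
  -- the donor map
  set dnr : V → V := fun v => if f v = r then ψ v else φ v with hdnrdef
  have hdonor : ∀ v, v ∉ P → DEF v →
      dnr v ∉ P ∧ ¬ DEF (dnr v) ∧ 2*r + 2 ≤ A (dnr v) ∧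
      ((f v = r ∧ v = φ (dnr v) ∧ f (dnr v) = r + 1) ∨
       (f v ≠ r ∧ v = ψ (dnr v) ∧ f (dnr v) + 2 = r)) := by
    intro v hv hdef
    obtain ⟨hMv, hmf, hmg⟩ := hdef
    have h1 := hofff v hv
    have h2 := hoffg v hv
    have hfv_le : f v ≤ r := by have := hMeq v; omega
    have hgv_le : g v ≤ r := by have := hMeq v; omega
    have hsum := hfg v
    by_cases hfr : f v = r
    · -- donor is ψ v
      have hq : dnr v = ψ v := by rw [hdnrdef]; simp [hfr]
      rw [hq]
      have hgq : g (ψ v) + 1 = g v := hψg v h2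
      rcases hmut v hv (ψ v) hmg with ⟨hqP, hc⟩
      have hvφq : v = φ (ψ v) ∧ f v + 1 = f (ψ v) := by
        rcases hc with h | ⟨_, hgc⟩
        · exact h
        · omega
      have hfq : f (ψ v) = r + 1 := by omega
      have hq1 : f (ψ v) ≠ 0 := hofff _ hqP
      have hq2 : g (ψ v) ≠ 0 := hoffg _ hqP
      have hMq : MM f g (ψ v) = r + 1 := by rw [hMeq]; omega
      have hqne : φ (ψ v) ≠ ψ (ψ v) := by
        intro he
        have ha := hφf (ψ v) hq1
        have hb := hψg (ψ v) hq2
        rw [← he] at hb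
        have := hfg (φ (ψ v))
        omega
      have hAq := own2 (ψ v) hq1 hq2 hqne
      refine ⟨hqP, ?_, by omega, Or.inl ⟨hfr, hvφq.1, hfq⟩⟩
      rintro ⟨hMq', _, _⟩
      omega
    · -- donor is φ v
      have hq : dnr v = φ v := by rw [hdnrdef]; simp [hfr]
      rw [hq]
      have hfv : f v + 1 = r := by omega
      have hgv : g v = r := by omega
      have hfq' : f (φ v) + 1 = f v := hφf v h1
      rcases hmut v hv (φ v) hmf with ⟨hqP, hc⟩
      have hvψq : v = ψ (φ v) ∧ g v + 1 = g (φ v) := by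
        rcases hc with ⟨_, hfc⟩ | h
        · omega
        · exact h
      have hgq : g (φ v) = r + 1 := by omega
      have hfq : f (φ v) + 2 = r := by omega
      have hq1 : f (φ v) ≠ 0 := hofff _ hqP
      have hq2 : g (φ v) ≠ 0 := hoffg _ hqP
      have hMq : MM f g (φ v) = r + 1 := by rw [hMeq]; omega
      have hqne : φ (φ v) ≠ ψ (φ v) := by
        intro he
        have ha := hφf (φ v) hq1
        have hb := hψg (φ v) hq2
        rw [← he] at hb
        have := hfg (φ (φ v))
        omega
      have hAq := own2 (φ v) hq1 hq2 hqne
      refine ⟨hqP, ?_, by omega, Or.inr ⟨hfr, hvψq.1, hfq⟩⟩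
      rintro ⟨hMq', _, _⟩
      omega
  -- off-path sum bound
  set OFF : Finset V := univ \ P with hOFF
  have hoffsum : (2*r+1) * OFF.card ≤ ∑ v ∈ OFF, A v := by
    set Δ : Finset V := OFF.filter DEF with hΔ
    have hΔsub : Δ ⊆ OFF := filter_subset _ _
    have hΔspec : ∀ v ∈ Δ, v ∉ P ∧ DEF v := by
      intro v hvv
      rw [hΔ, mem_filter, hOFF, mem_sdiff] at hvv
      exact ⟨hvv.1.2, hvv.2⟩
    set I : Finset V := Δ.image dnr with hI
    have hIspec : ∀ w ∈ I, w ∈ OFF ∧ w ∉ Δ ∧ 2*r + 2 ≤ A w := by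
      intro w hw
      rcases mem_image.mp hw with ⟨v, hvΔ, rfl⟩
      obtain ⟨hv1, hv2⟩ := hΔspec v hvΔ
      obtain ⟨hq1, hq2, hq3, _⟩ := hdonor v hv1 hv2
      refine ⟨by rw [hOFF, mem_sdiff]; exact ⟨mem_univ _, hq1⟩, ?_, hq3⟩
      intro hwΔ
      exact hq2 (hΔspec _ hwΔ).2
    have hIcard : I.card = Δ.card := by
      rw [hI]
      apply Finset.card_image_of_injOn
      intro v1 hv1 v2 hv2 he
      obtain ⟨hv11, hv12⟩ := hΔspec v1 hv1
      obtain ⟨hv21, hv22⟩ := hΔspec v2 hv2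
      obtain ⟨_, _, _, hs1⟩ := hdonor v1 hv11 hv12
      obtain ⟨_, _, _, hs2⟩ := hdonor v2 hv21 hv22
      rcases hs1 with ⟨_, he1, hf1⟩ | ⟨_, he1, hf1⟩ <;>
        rcases hs2 with ⟨_, he2, hf2⟩ | ⟨_, he2, hf2⟩
      · rw [he1, he2, he]
      · rw [he] at hf1; omega
      · rw [he] at hf1; omega
      · rw [he1, he2, he]
    have hIsub : I ⊆ OFF \ Δ := by
      intro w hw
      obtain ⟨h1, h2, _⟩ := hIspec w hw
      rw [mem_sdiff]; exact ⟨h1, h2⟩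
    -- split the sum
    have split1 : ∑ v ∈ OFF, A v = ∑ v ∈ OFF \ Δ, A v + ∑ v ∈ Δ, A v :=
      (Finset.sum_sdiff hΔsub).symm
    have split2 : ∑ v ∈ OFF \ Δ, A v = ∑ v ∈ (OFF \ Δ) \ I, A v + ∑ v ∈ I, A v :=
      (Finset.sum_sdiff hIsub).symm
    have bΔ : 2*r * Δ.card ≤ ∑ v ∈ Δ, A v := by
      rw [mul_comm, ← smul_eq_mul]
      apply Finset.card_nsmul_le_sum
      intro v hv
      obtain ⟨hv1, _⟩ := hΔspec v hv
      rcases hcase v hv1 with h | ⟨_, h⟩ <;> omega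
    have bI : (2*r+2) * I.card ≤ ∑ v ∈ I, A v := by
      rw [mul_comm, ← smul_eq_mul]
      apply Finset.card_nsmul_le_sum
      intro w hw
      exact (hIspec w hw).2.2
    have bR : (2*r+1) * ((OFF \ Δ) \ I).card ≤ ∑ v ∈ (OFF \ Δ) \ I, A v := by
      rw [mul_comm, ← smul_eq_mul]
      apply Finset.card_nsmul_le_sum
      intro v hv
      rw [mem_sdiff, mem_sdiff] at hv
      obtain ⟨⟨hv1, hv2⟩, _⟩ := hv
      have hv1' : v ∉ P := by rw [hOFF, mem_sdiff] at hv1; exact hv1.2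
      rcases hcase v hv1' with h | ⟨hdef, _⟩
      · exact h
      · exact absurd (mem_filter.mpr ⟨hv1, hdef⟩) hv2
    have c1 : (OFF \ Δ).card + Δ.card = OFF.card := Finset.card_sdiff_add_card_eq_card hΔsub
    have c2 : ((OFF \ Δ) \ I).card + I.card = (OFF \ Δ).card := Finset.card_sdiff_add_card_eq_card hIsub
    have expand : (2*r+1) * OFF.card =
        2*r * Δ.card + (2*r+2) * Δ.card + (2*r+1) * ((OFF \ Δ) \ I).card := by
      have e1 : OFF.card = 2 * Δ.card + ((OFF \ Δ) \ I).card := by omega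
      rw [e1]; ring
    rw [hIcard] at bI
    rw [split1, split2, expand]
    omega
  -- path sum bound
  have hpinj : ∀ i ∈ range (d+1), ∀ j ∈ range (d+1), pth i = pth j → i = j := by
    intro i hi j hj he
    rw [mem_range] at hi hj
    have h1 := hpf i (by omega)
    have h2 := hpf j (by omega)
    rw [he] at h1; omega
  have hpathA : ∀ j, j ≤ d → (if j = 0 ∨ j = d then d else 2 * max j (d - j)) ≤ A (pth j) := by
    intro j hj
    by_cases hj0 : j = 0 ∨ j = d
    · rw [if_pos hj0]
      rcases hj0 with rfl | hjd
      · have hgx : g (pth 0) = d := by have := hpg 0 (by omega); omega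
        have := own1ψ (pth 0) (by omega)
        have := hMeq (pth 0)
        omega
      · rw [hjd]
        have hfy : f (pth d) = d := hpf d le_rfl
        have := own1φ (pth d) (by omega)
        have := hMeq (pth d)
        omega
    · rw [if_neg hj0]
      push_neg at hj0
      obtain ⟨hj1, hj2⟩ := hj0
      have hfj : f (pth j) = j := hpf j hj
      have hgj : g (pth j) = d - j := hpg j hj
      have h1 : f (pth j) ≠ 0 := by omega
      have h2 : g (pth j) ≠ 0 := by omega
      have hfφ := hφf (pth j) h1
      have hgψ := hψg (pth j) h2
      have hfψ : d ≤ f (ψ (pth j)) + g (ψ (pth j)) := hfg _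
      have hne : φ (pth j) ≠ ψ (pth j) := by
        intro he
        rw [he] at hfφ
        omega
      have := own2 (pth j) h1 h2 hne
      have := hMeq (pth j)
      omega
  have hPcard : P.card = d + 1 := by
    rw [hP, Finset.card_image_of_injOn hpinj, card_range]
  have hpsum : 6*r^2 + 2 ≤ ∑ v ∈ P, A v + 6*r := by
    have himg : ∑ v ∈ P, A v = ∑ j ∈ range (d+1), A (pth j) := by
      rw [hP, Finset.sum_image hpinj]
    have hbound : ∑ j ∈ range (d+1), (if j = 0 ∨ j = d then d else 2 * max j (d - j))
        ≤ ∑ j ∈ range (d+1), A (pth j) := by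
      apply Finset.sum_le_sum
      intro j hjm
      rw [mem_range] at hjm
      exact hpathA j (by omega)
    -- evaluate the explicit sum
    have hsum_e : ∑ j ∈ range (d+1), (if j = 0 ∨ j = d then d else 0) = 2*d := by
      have hfilter : (range (d+1)).filter (fun j => j = 0 ∨ j = d) = {0, d} := by
        ext j
        simp only [mem_filter, mem_range, Finset.mem_insert, Finset.mem_singleton]
        constructor
        · rintro ⟨_, h⟩; exact h
        · rintro (rfl | rfl) <;> constructor <;> omega
      rw [← Finset.sum_filter, hfilter, Finset.sum_insert (by simp; omega), Finset.sum_singleton]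
      omega
    have hterm : ∀ j ∈ range (d+1),
        2 * max j (d - j) = (if j = 0 ∨ j = d then d else 2 * max j (d - j)) +
          (if j = 0 ∨ j = d then d else 0) := by
      intro j hjm
      rw [mem_range] at hjm
      by_cases hc : j = 0 ∨ j = d
      · rw [if_pos hc, if_pos hc]
        rcases hc with rfl | rfl <;> omega
      · rw [if_neg hc, if_neg hc]
        omega
    have hmax_total : ∑ j ∈ range (d+1), 2 * max j (d - j) + 2*r = 6*r^2 := by
      have h2r : d + 1 = 2*r := hd
      have : ∑ j ∈ range (d+1), 2 * max j (d - j) = 2 * ∑ j ∈ range (2*r), max j (2*r - 1 - j) := by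
        rw [← Finset.mul_sum, h2r]
        congr 1
        apply Finset.sum_congr rfl
        intro j _
        congr 1
        omega
      rw [this]
      have := sum_max_eq r (by omega)
      nlinarith [this]
    have hsplit : ∑ j ∈ range (d+1), 2 * max j (d - j) =
        ∑ j ∈ range (d+1), (if j = 0 ∨ j = d then d else 2 * max j (d - j)) + 2*d := by
      rw [← hsum_e, ← Finset.sum_add_distrib]
      exact Finset.sum_congr rfl hterm
    rw [himg]
    omega
  -- assemble
  have hsplituniv : ∑ v ∈ OFF, A v + ∑ v ∈ P, A v = ∑ v, A v := by
    rw [hOFF]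
    exact Finset.sum_sdiff (Finset.subset_univ P)
  have hcardOFF : OFF.card = n - (d+1) := by
    rw [hOFF, Finset.card_sdiff_of_subset (Finset.subset_univ P), hPcard, Finset.card_univ, hn]
  have hnge : d + 1 ≤ n := by
    rw [← hn, ← hPcard, ← Finset.card_univ]
    exact Finset.card_le_card (Finset.subset_univ P)
  have htot := sum_A_le G f g φ ψ
  rw [← hA] at htot
  constructor
  · omega
  · have h1 : 6*r^2 + 2 + (2*r+1) * (n - 2*r) ≤ ∑ v, A v + 6*r := by
      have e1 : n - 2*r = OFF.card := by omega
      rw [e1]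
      omega
    omega

end Key


section Walks

variable {G : SimpleGraph V}

lemma dist_getVert_le (hG : G.Connected) {a b : V} (p : G.Walk a b) (j : ℕ) :
    G.dist a (p.getVert j) ≤ j := by
  induction j with
  | zero => simp [SimpleGraph.Walk.getVert_zero]
  | succ j ih =>
    by_cases hj : j < p.length
    · have hadj := p.adj_getVert_succ hj
      calc G.dist a (p.getVert (j+1))
          ≤ G.dist a (p.getVert j) + G.dist (p.getVert j) (p.getVert (j+1)) := hG.dist_triangle
        _ ≤ j + 1 := by
            have h1 : G.dist (p.getVert j) (p.getVert (j+1)) = 1 :=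
              SimpleGraph.dist_eq_one_iff_adj.mpr hadj
            omega
    · have h1 : p.getVert (j+1) = b := p.getVert_of_length_le (by omega)
      have h2 : p.getVert j = b := p.getVert_of_length_le (by omega)
      rw [h1, ← h2]
      omega

/-- every vertex at positive distance from `z` has a neighbour strictly closer to `z`. -/
lemma exists_descent (hG : G.Connected) (z v : V) (h : G.dist z v ≠ 0) :
    ∃ u, G.Adj v u ∧ G.dist z u + 1 = G.dist z v := by
  obtain ⟨Q, hQ⟩ := hG.exists_walk_length_eq_dist z v
  set m := G.dist z v with hm
  have hm1 : 1 ≤ m := by omega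
  refine ⟨Q.getVert (m - 1), ?_, ?_⟩
  · have hadj : G.Adj (Q.getVert (m-1)) (Q.getVert (m-1+1)) :=
      Q.adj_getVert_succ (by omega)
    have he : m - 1 + 1 = m := by omega
    rw [he] at hadj
    have hv : Q.getVert m = v := by
      rw [← hQ]; exact Q.getVert_length
    rw [hv] at hadj
    exact hadj.symm
  · have hub : G.dist z (Q.getVert (m-1)) ≤ m - 1 := dist_getVert_le hG Q (m-1)
    have hlb : m ≤ G.dist z (Q.getVert (m-1)) + 1 := by
      have hadj : G.Adj (Q.getVert (m-1)) (Q.getVert (m-1+1)) :=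
        Q.adj_getVert_succ (by omega)
      have he : m - 1 + 1 = m := by omega
      rw [he] at hadj
      have hv : Q.getVert m = v := by rw [← hQ]; exact Q.getVert_length
      rw [hv] at hadj
      calc m = G.dist z v := rfl
        _ ≤ G.dist z (Q.getVert (m-1)) + G.dist (Q.getVert (m-1)) v := hG.dist_triangle
        _ ≤ G.dist z (Q.getVert (m-1)) + 1 := by
            have := SimpleGraph.dist_eq_one_iff_adj.mpr hadj
            omega
    omega

end Walks

end EciOdd


/-- Let `G` be a connected graph of order `n` and odd diameter `d ≥ 3`.  Then
`ξ^c(G) ≥ nd + 2n + d²/2 − 3d − 3/2 = ξ^c(V_{n,d})`. -/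
theorem eci_lower_bound_odd {V : Type*} [Fintype V]
    (G : SimpleGraph V) (hG : G.Connected) (n d : ℕ)
    (hn : Fintype.card V = n) (hdiam : G.diam = d) (hdo : Odd d) (hd3 : 3 ≤ d) :
    (G.eci : ℚ) ≥ n * d + 2 * n + d ^ 2 / 2 - 3 * d - 3 / 2 := by
  classical
  obtain ⟨k, hk⟩ := hdo
  set r := k + 1 with hrdef
  have hd2r : d + 1 = 2*r := by omega
  have hr2 : 2 ≤ r := by omega
  haveI : Nonempty V := hG.nonempty
  obtain ⟨x, y, hxy⟩ := SimpleGraph.exists_dist_eq_diam (G := G)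
  rw [hdiam] at hxy
  set f : V → ℕ := fun v => G.dist x v with hfdef
  set g : V → ℕ := fun v => G.dist v y with hgdef
  have hfg : ∀ v, d ≤ f v + g v := by
    intro v
    have := hG.dist_triangle (u := x) (v := v) (w := y)
    rw [hxy] at this
    exact this
  obtain ⟨W, hW⟩ := hG.exists_walk_length_eq_dist x y
  rw [hxy] at hW
  set pth : ℕ → V := fun j => W.getVert j with hpthdef
  have hx0 : pth 0 = x := W.getVert_zero
  have hyd : pth d = y := by
    show W.getVert d = y
    rw [← hW]
    exact W.getVert_length
  have hpfle : ∀ j : ℕ, f (pth j) ≤ j := fun j => EciOdd.dist_getVert_le hG W j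
  have hpgle : ∀ j, j ≤ d → g (pth j) ≤ d - j := by
    intro j hj
    have h1 : W.reverse.getVert (d - j) = pth j := by
      show W.reverse.getVert (d - j) = W.getVert j
      rw [W.getVert_reverse, hW]
      congr 1
      omega
    have h2 := EciOdd.dist_getVert_le hG W.reverse (d - j)
    rw [h1] at h2
    calc g (pth j) = G.dist (pth j) y := rfl
      _ = G.dist y (pth j) := SimpleGraph.dist_comm
      _ ≤ d - j := h2
  have hpf : ∀ j, j ≤ d → f (pth j) = j := by
    intro j hj
    have h1 := hfg (pth j)
    have h2 := hpfle j
    have h3 := hpgle j hj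
    omega
  have hpg : ∀ j, j ≤ d → g (pth j) = d - j := by
    intro j hj
    have h1 := hfg (pth j)
    have h2 := hpfle j
    have h3 := hpgle j hj
    omega
  have hfx : ∀ v, f v = 0 → v = x := fun v h => ((hG.dist_eq_zero_iff).mp h).symm
  have hgy : ∀ v, g v = 0 → v = y := fun v h => (hG.dist_eq_zero_iff).mp h
  have hdesf : ∀ v, f v ≠ 0 → ∃ u, G.Adj v u ∧ f u + 1 = f v :=
    fun v hv => EciOdd.exists_descent hG x v hv
  have hdesg : ∀ v, g v ≠ 0 → ∃ u, G.Adj v u ∧ g u + 1 = g v := by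
    intro v hv
    have hv' : G.dist y v ≠ 0 := by
      rw [SimpleGraph.dist_comm]
      exact hv
    obtain ⟨u, hadj, hu⟩ := EciOdd.exists_descent hG y v hv'
    refine ⟨u, hadj, ?_⟩
    show G.dist u y + 1 = G.dist v y
    rw [SimpleGraph.dist_comm (u := u), SimpleGraph.dist_comm (u := v)]
    exact hu
  -- pointer function towards x
  have hφex : ∃ φ : V → V, (∀ v, f v ≠ 0 → G.Adj v (φ v)) ∧
      (∀ v, f v ≠ 0 → f (φ v) + 1 = f v) ∧
      (∀ j, j ≤ d → ∃ i, i ≤ d ∧ φ (pth j) = pth i) := by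
    refine ⟨fun v => if (∃ j, j ≤ d ∧ v = pth j) then
        (if f v = 0 then v else pth (f v - 1))
      else (if hfv : f v = 0 then v else Classical.choose (hdesf v hfv)), ?_, ?_, ?_⟩
    · intro v hv
      by_cases hp : ∃ j, j ≤ d ∧ v = pth j
      · beta_reduce
        rw [if_pos hp, if_neg hv]
        obtain ⟨j, hj, rfl⟩ := hp
        have hfj : f (pth j) = j := hpf j hj
        have hj1 : 1 ≤ j := by omega
        rw [hfj]
        have hadj : G.Adj (pth (j-1)) (pth (j-1+1)) := W.adj_getVert_succ (by omega)
        have he : j - 1 + 1 = j := by omega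
        rw [he] at hadj
        exact hadj.symm
      · beta_reduce
        rw [if_neg hp, dif_neg hv]
        exact (Classical.choose_spec (hdesf v hv)).1
    · intro v hv
      by_cases hp : ∃ j, j ≤ d ∧ v = pth j
      · beta_reduce
        rw [if_pos hp, if_neg hv]
        obtain ⟨j, hj, rfl⟩ := hp
        have hfj : f (pth j) = j := hpf j hj
        have hj1 : 1 ≤ j := by omega
        rw [hfj, hpf (j-1) (by omega)]
        omega
      · beta_reduce
        rw [if_neg hp, dif_neg hv]
        exact (Classical.choose_spec (hdesf v hv)).2
    · intro j hj
      have hp : ∃ j', j' ≤ d ∧ pth j = pth j' := ⟨j, hj, rfl⟩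
      beta_reduce
      rw [if_pos hp]
      by_cases h0 : f (pth j) = 0
      · rw [if_pos h0]
        exact ⟨j, hj, rfl⟩
      · rw [if_neg h0]
        refine ⟨f (pth j) - 1, ?_, rfl⟩
        rw [hpf j hj]
        omega
  -- pointer function towards y
  have hψex : ∃ ψ : V → V, (∀ v, g v ≠ 0 → G.Adj v (ψ v)) ∧
      (∀ v, g v ≠ 0 → g (ψ v) + 1 = g v) ∧
      (∀ j, j ≤ d → ∃ i, i ≤ d ∧ ψ (pth j) = pth i) := by
    refine ⟨fun v => if (∃ j, j ≤ d ∧ v = pth j) then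
        (if g v = 0 then v else pth (f v + 1))
      else (if hgv : g v = 0 then v else Classical.choose (hdesg v hgv)), ?_, ?_, ?_⟩
    · intro v hv
      by_cases hp : ∃ j, j ≤ d ∧ v = pth j
      · beta_reduce
        rw [if_pos hp, if_neg hv]
        obtain ⟨j, hj, rfl⟩ := hp
        have hfj : f (pth j) = j := hpf j hj
        have hgj : g (pth j) = d - j := hpg j hj
        have hjd : j < d := by omega
        rw [hfj]
        exact W.adj_getVert_succ (by omega)
      · beta_reduce
        rw [if_neg hp, dif_neg hv]
        exact (Classical.choose_spec (hdesg v hv)).1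
    · intro v hv
      by_cases hp : ∃ j, j ≤ d ∧ v = pth j
      · beta_reduce
        rw [if_pos hp, if_neg hv]
        obtain ⟨j, hj, rfl⟩ := hp
        have hfj : f (pth j) = j := hpf j hj
        have hgj : g (pth j) = d - j := hpg j hj
        have hjd : j < d := by omega
        rw [hfj, hpg (j+1) (by omega), hgj]
        omega
      · beta_reduce
        rw [if_neg hp, dif_neg hv]
        exact (Classical.choose_spec (hdesg v hv)).2
    · intro j hj
      have hp : ∃ j', j' ≤ d ∧ pth j = pth j' := ⟨j, hj, rfl⟩
      beta_reduce
      rw [if_pos hp]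
      by_cases h0 : g (pth j) = 0
      · rw [if_pos h0]
        exact ⟨j, hj, rfl⟩
      · rw [if_neg h0]
        refine ⟨f (pth j) + 1, ?_, rfl⟩
        rw [hpf j hj]
        have := hpg j hj
        omega
  obtain ⟨φ, hφa, hφf, hpφ⟩ := hφex
  obtain ⟨ψ, hψa, hψg, hpψ⟩ := hψex
  obtain ⟨hn2r, hkey⟩ := EciOdd.key G r d n f g x y pth φ ψ hr2 hd2r hn hfg
    hφa hφf hψa hψg hpf hpg hpφ hpψ hx0 hyd hfx hgy
  -- connect to the eccentric connectivity index
  have hM_ecc : ∀ v, EciOdd.MM f g v ≤ G.ecc v := by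
    intro v
    have h1 : G.dist v x ≤ G.ecc v := Finset.le_sup (Finset.mem_univ x)
    have h2 : G.dist v y ≤ G.ecc v := Finset.le_sup (Finset.mem_univ y)
    have e1 : f v = G.dist v x := SimpleGraph.dist_comm
    have e2 : g v = G.dist v y := rfl
    have e3 : EciOdd.MM f g v = max (f v) (g v) := rfl
    omega
  have hdeg : ∀ v, (Finset.univ.filter (G.Adj v)).card = Nat.card (G.neighborSet v) := by
    intro v
    rw [Nat.card_eq_fintype_card, ← Set.toFinset_card]
    congr 1
    ext u
    simp
  have hchain : (∑ v, EciOdd.MM f g v * (Finset.univ.filter (G.Adj v)).card) ≤ G.eci := by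
    rw [SimpleGraph.eci]
    apply Finset.sum_le_sum
    intro v _
    rw [hdeg v]
    exact Nat.mul_le_mul_right _ (hM_ecc v)
  have hfinal : 6*r^2 + 2 + (2*r+1) * (n - 2*r) ≤ G.eci + 6*r := by omega
  -- cast to ℚ
  set m := n - 2*r with hmdef
  have hnm : (n:ℚ) = (m:ℚ) + 2*(r:ℚ) := by
    have : n = m + 2*r := by omega
    exact_mod_cast this
  have hdq : (d:ℚ) = 2*(r:ℚ) - 1 := by
    have : (d:ℚ) + 1 = 2*(r:ℚ) := by exact_mod_cast hd2r
    linarith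
  have hQ : (6*(r:ℚ)^2 + 2 + (2*(r:ℚ)+1)*(m:ℚ)) ≤ (G.eci : ℚ) + 6*(r:ℚ) := by
    exact_mod_cast hfinal
  rw [ge_iff_le, hnm, hdq]
  ring_nf
  ring_nf at hQ
  linarith [hQ]
end

section
/- Let T be a tree of order n and diameter d ≥ 3. Then ξ^c(T) ≥ ξ^c(V_{n,d}); explicitly, ξ^c(T) ≥ nd + n + d²/2 − 2d − 1 if d is even, and ξ^c(T) ≥ nd + 2n + d²/2 − 3d − 3/2 if d is odd. -/
open Finset

namespace EciAux

variable {V : Type*}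

/-- Prefix/suffix distance bounds along a walk. -/
lemma getVert_dist_bounds {G : SimpleGraph V} (hconn : G.Connected) {a b : V}
    (p : G.Walk a b) (i : ℕ) :
    G.dist a (p.getVert i) ≤ i ∧ G.dist (p.getVert i) b ≤ p.length - i := by
  induction p generalizing i with
  | nil =>
    constructor <;> simp [SimpleGraph.Walk.getVert, SimpleGraph.dist_self]
  | @cons u x c h q ih =>
    cases i with
    | zero =>
      refine ⟨by simp [SimpleGraph.dist_self], ?_⟩
      simpa using SimpleGraph.dist_le (SimpleGraph.Walk.cons h q)
    | succ i =>
      have h1 := (ih i).1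
      have h2 := (ih i).2
      have htri := hconn.dist_triangle (u := u) (v := x) (w := q.getVert i)
      have hux : G.dist u x ≤ 1 := by
        simpa using SimpleGraph.dist_le h.toWalk
      constructor
      · simp only [SimpleGraph.Walk.getVert_cons_succ]
        omega
      · simp only [SimpleGraph.Walk.getVert_cons_succ, SimpleGraph.Walk.length_cons]
        omega

/-- In a tree, adjacent vertices have different distances to any vertex. -/
lemma adj_dist_ne {G : SimpleGraph V} (hT : G.IsTree) (u : V) {a b : V} (hab : G.Adj a b) :
    G.dist u a ≠ G.dist u b := by
  classical
  intro hEq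
  have hconn := hT.isConnected
  obtain ⟨pa, hpa, hla⟩ := hconn.exists_path_of_dist u a
  obtain ⟨pb, hpb, hlb⟩ := hconn.exists_path_of_dist u b
  have hbna : b ∉ pa.support := by
    intro hb
    have h1 : G.dist u b ≤ (pa.takeUntil b hb).length := SimpleGraph.dist_le _
    have hspec := congrArg SimpleGraph.Walk.length (pa.take_spec hb)
    rw [SimpleGraph.Walk.length_append] at hspec
    have hdrop : (pa.dropUntil b hb).length ≠ 0 := by
      intro h0
      exact hab.ne' (SimpleGraph.Walk.eq_of_length_eq_zero h0)
    omega
  -- the path `b → a → ... → u` versus the path `b → ... → u`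
  have hqa : (SimpleGraph.Walk.cons hab.symm pa.reverse).IsPath :=
    SimpleGraph.Walk.IsPath.cons hpa.reverse (by
      rwa [SimpleGraph.Walk.support_reverse, List.mem_reverse])
  have huniq := hT.existsUnique_path b u
  have := huniq.unique hqa hpb.reverse
  have hlen := congrArg SimpleGraph.Walk.length this
  simp only [SimpleGraph.Walk.length_cons, SimpleGraph.Walk.length_reverse] at hlen
  omega

/-- In a tree, adjacent vertices have distances to `u` differing by exactly one. -/
lemma adj_dist_cases {G : SimpleGraph V} (hT : G.IsTree) (u : V) {a b : V} (hab : G.Adj a b) :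
    G.dist u b = G.dist u a + 1 ∨ G.dist u a = G.dist u b + 1 := by
  have hconn := hT.isConnected
  have h1 : G.dist u b ≤ G.dist u a + 1 := by
    have := hconn.dist_triangle (u := u) (v := a) (w := b)
    have : G.dist a b = 1 := SimpleGraph.dist_eq_one_iff_adj.mpr hab
    omega
  have h2 : G.dist u a ≤ G.dist u b + 1 := by
    have := hconn.dist_triangle (u := u) (v := b) (w := a)
    have : G.dist b a = 1 := SimpleGraph.dist_eq_one_iff_adj.mpr hab.symm
    omega
  have h3 := adj_dist_ne hT u hab
  omega

/-- Parity of distances along a walk in a tree. -/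
lemma walk_parity {G : SimpleGraph V} (hT : G.IsTree) (u : V) {x y : V} (W : G.Walk x y) :
    (G.dist u x + W.length) % 2 = G.dist u y % 2 := by
  induction W with
  | nil => simp
  | @cons a c y h q ih =>
    have := adj_dist_cases hT u h
    simp only [SimpleGraph.Walk.length_cons]
    omega

lemma dist_parity {G : SimpleGraph V} (hT : G.IsTree) (u v w : V) :
    (G.dist u v + G.dist v w) % 2 = G.dist u w % 2 := by
  obtain ⟨W, hW⟩ := hT.isConnected.exists_walk_length_eq_dist v w
  have := walk_parity hT u W
  omega

/-- If `dist u v + dist v w = dist u w` in a tree, then `v` lies on the unique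
shortest path, at position `dist u v`. -/
lemma eq_getVert_of_dist_add {G : SimpleGraph V} (hT : G.IsTree) {u w v : V}
    (p : G.Walk u w) (hp : p.length = G.dist u w)
    (hv : G.dist u v + G.dist v w = G.dist u w) :
    v = p.getVert (G.dist u v) := by
  have hconn := hT.isConnected
  obtain ⟨q1, hq1⟩ := hconn.exists_walk_length_eq_dist u v
  obtain ⟨q2, hq2⟩ := hconn.exists_walk_length_eq_dist v w
  have hlen : (q1.append q2).length = G.dist u w := by
    rw [SimpleGraph.Walk.length_append]; omega
  have hqpath : (q1.append q2).IsPath :=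
    SimpleGraph.Walk.isPath_of_length_eq_dist _ hlen
  have hppath : p.IsPath := SimpleGraph.Walk.isPath_of_length_eq_dist _ hp
  have heq : q1.append q2 = p := (hT.existsUnique_path u w).unique hqpath hppath
  have : (q1.append q2).getVert q1.length = v := by
    rw [SimpleGraph.Walk.getVert_append]
    simp
  rw [← heq, ← hq1, this]

/-- Gauss-type sum with truncated subtraction. -/
lemma gauss_sub (r : ℕ) : ∀ N : ℕ, 2 * (∑ i ∈ Finset.range N, (i - r)) = (N - r) * (N - r - 1)
  | 0 => by simp
  | (N + 1) => by
    rw [Finset.sum_range_succ, Nat.mul_add, gauss_sub r N]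
    rcases le_or_gt r N with h | h
    · obtain ⟨k, rfl⟩ := Nat.exists_eq_add_of_le h
      rcases Nat.eq_zero_or_pos k with rfl | hk
      · simp
      · have e1 : r + k - r = k := by omega
        have e2 : r + k + 1 - r = k + 1 := by omega
        rw [e1, e2, Nat.add_sub_cancel]
        cases k with
        | zero => simp
        | succ k =>
          rw [Nat.succ_sub_one]
          ring
    · have e1 : N - r = 0 := by omega
      have e2 : N + 1 - r = 0 ∨ N + 1 - r = 1 := by omega
      rcases e2 with e2 | e2 <;> simp [e1, e2]

end EciAux

/-- Let `T` be a tree of order `n` and diameter `d ≥ 3`.  Then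
`ξ^c(T) ≥ ξ^c(V_{n,d})`; explicitly, `ξ^c(T) ≥ nd + n + d²/2 − 2d − 1` if `d`
is even, and `ξ^c(T) ≥ nd + 2n + d²/2 − 3d − 3/2` if `d` is odd. -/
theorem eci_lower_bound_tree {V : Type*} [Fintype V]
    (T : SimpleGraph V) (hT : T.IsTree) (n d : ℕ)
    (hn : Fintype.card V = n) (hdiam : T.diam = d) (hd3 : 3 ≤ d) :
    (Even d → (T.eci : ℚ) ≥ n * d + n + d ^ 2 / 2 - 2 * d - 1) ∧
    (Odd d → (T.eci : ℚ) ≥ n * d + 2 * n + d ^ 2 / 2 - 3 * d - 3 / 2) := by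
  classical
  have hconn := hT.isConnected
  have hneV : Nonempty V := hconn.nonempty
  obtain ⟨u, w, huw⟩ := T.exists_dist_eq_diam
  rw [hdiam] at huw
  obtain ⟨p, hplen'⟩ := hconn.exists_walk_length_eq_dist u w
  have hplen : p.length = d := by rw [hplen', huw]
  set r : ℕ := (d + 1) / 2 with hr
  have hr2 : d ≤ 2 * r := by omega
  set m : ℕ := d - r with hm
  -- distances along the diametral path
  have hP : ∀ i ≤ d, T.dist u (p.getVert i) = i ∧ T.dist (p.getVert i) w = d - i := by
    intro i hi
    have hb := EciAux.getVert_dist_bounds hconn p i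
    have htri := hconn.dist_triangle (u := u) (v := p.getVert i) (w := w)
    rw [hplen] at hb
    omega
  have hInj : ∀ i ≤ d, ∀ j ≤ d, p.getVert i = p.getVert j → i = j := by
    intro i hi j hj hij
    have h1 := (hP i hi).1
    have h2 := (hP j hj).1
    rw [hij] at h1
    omega
  -- eccentricity lower bounds
  have heccdist : ∀ v x : V, T.dist v x ≤ T.ecc v := fun v x =>
    Finset.le_sup (Finset.mem_univ x)
  have heccb : ∀ v, T.dist u v ≤ T.ecc v ∧ T.dist v w ≤ T.ecc v ∧
      d ≤ T.dist u v + T.dist v w := by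
    intro v
    refine ⟨?_, heccdist v w, ?_⟩
    · rw [SimpleGraph.dist_comm]; exact heccdist v u
    · have := hconn.dist_triangle (u := u) (v := v) (w := w); omega
  have hecc_r : ∀ v, r ≤ T.ecc v := by
    intro v; have := heccb v; omega
  -- the path vertex set
  set A : Finset V := (Finset.range (d + 1)).image p.getVert with hA
  have hinjOn : ∀ i ∈ Finset.range (d + 1), ∀ j ∈ Finset.range (d + 1),
      p.getVert i = p.getVert j → i = j := by
    intro i hi j hj hij
    have hi' := Finset.mem_range.mp hi
    have hj' := Finset.mem_range.mp hj
    exact hInj i (by omega) j (by omega) hij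
  have hcardA : A.card = d + 1 := by
    rw [hA, Finset.card_image_of_injOn hinjOn, Finset.card_range]
  have hnA : d + 1 ≤ n := by
    rw [← hcardA, ← hn]
    exact Finset.card_le_univ A
  -- off-path vertices have bigger eccentricity
  have hecc_off : ∀ v, v ∉ A → r + 1 ≤ T.ecc v := by
    intro v hv
    have hb := heccb v
    have hpar := EciAux.dist_parity hT u v w
    rw [huw] at hpar
    have hne : T.dist u v + T.dist v w ≠ d := by
      intro hsum
      apply hv
      rw [hA]
      refine Finset.mem_image.mpr ⟨T.dist u v, Finset.mem_range.mpr (by omega), ?_⟩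
      exact (EciAux.eq_getVert_of_dist_add hT p (by rw [hplen, huw])
        (by rw [huw]; exact hsum)).symm
    omega
  -- degree lower bounds
  have hdeg1 : ∀ v, 1 ≤ Nat.card (T.neighborSet v) := by
    intro v
    have hnt : Nontrivial V := T.nontrivial_of_diam_ne_zero (by rw [hdiam]; omega)
    obtain ⟨y, hy⟩ := exists_ne v
    obtain ⟨W, hW⟩ := hconn.exists_walk_length_eq_dist v y
    have hpos : 0 < W.length := by
      rw [hW]
      exact hconn.pos_dist_of_ne (Ne.symm hy)
    have hadj : T.Adj v (W.getVert 1) := by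
      have := W.adj_getVert_succ (i := 0) hpos
      rwa [W.getVert_zero] at this
    rw [Nat.card_coe_set_eq]
    exact (Set.ncard_pos (Set.toFinite _)).mpr ⟨W.getVert 1, hadj⟩
  have hdeg2 : ∀ i, 0 < i → i < d → 2 ≤ Nat.card (T.neighborSet (p.getVert i)) := by
    intro i h0 hdlt
    have ha1 : T.Adj (p.getVert i) (p.getVert (i - 1)) := by
      have := p.adj_getVert_succ (i := i - 1) (by omega)
      have he : i - 1 + 1 = i := by omega
      rw [he] at this
      exact this.symm
    have ha2 : T.Adj (p.getVert i) (p.getVert (i + 1)) :=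
      p.adj_getVert_succ (by omega)
    have hne : p.getVert (i - 1) ≠ p.getVert (i + 1) := by
      intro hEq
      have := hInj (i - 1) (by omega) (i + 1) (by omega) hEq
      omega
    rw [Nat.card_coe_set_eq]
    exact (Set.one_lt_ncard_iff (Set.toFinite _)).mpr ⟨_, _, ha1, ha2, hne⟩
  -- split the index
  set F : V → ℕ := fun v => (T.ecc v - r) * Nat.card (T.neighborSet v) with hF
  have hsplit : T.eci = r * (∑ v, Nat.card (T.neighborSet v)) + ∑ v, F v := by
    rw [SimpleGraph.eci, Finset.mul_sum, ← Finset.sum_add_distrib]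
    refine Finset.sum_congr rfl fun v _ => ?_
    simp only [hF]
    rw [← add_mul, Nat.add_sub_cancel' (hecc_r v)]
  -- degree sum
  have hsumD : (∑ v, Nat.card (T.neighborSet v)) = 2 * (n - 1) := by
    have h1 : ∀ v : V, Nat.card (T.neighborSet v) = T.degree v := by
      intro v
      rw [Nat.card_eq_fintype_card, SimpleGraph.card_neighborSet_eq_degree]
    simp_rw [h1]
    rw [SimpleGraph.sum_degrees_eq_twice_card_edges]
    have := hT.card_edgeFinset
    rw [hn] at this
    omega
  -- sum over the complement of the path
  have hsdiff : (∑ v ∈ Finset.univ \ A, F v) + ∑ v ∈ A, F v = ∑ v, F v :=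
    Finset.sum_sdiff (Finset.subset_univ A)
  have hB : n - (d + 1) ≤ ∑ v ∈ Finset.univ \ A, F v := by
    have hcard : (Finset.univ \ A).card = n - (d + 1) := by
      rw [Finset.card_sdiff_of_subset (Finset.subset_univ A), Finset.card_univ, hn, hcardA]
    calc n - (d + 1) = (Finset.univ \ A).card • 1 := by rw [hcard, smul_eq_mul, mul_one]
      _ ≤ ∑ v ∈ Finset.univ \ A, F v := by
          refine Finset.card_nsmul_le_sum _ _ _ ?_
          intro v hv
          have hvA : v ∉ A := (Finset.mem_sdiff.mp hv).2
          have h1 := hecc_off v hvA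
          have h2 := hdeg1 v
          have h3 : 1 ≤ T.ecc v - r := by omega
          simp only [hF]
          simpa using Nat.mul_le_mul h3 h2
  -- sum over the path
  have hA_sum : ∑ v ∈ A, F v = ∑ i ∈ Finset.range (d + 1), F (p.getVert i) := by
    rw [hA]
    exact Finset.sum_image hinjOn
  set t : ℕ → ℕ := fun i => (i - r) + ((d - i) - r) with ht
  have hFi : ∀ i ≤ d, t i ≤ T.ecc (p.getVert i) - r := by
    intro i hi
    have h1 := (hP i hi).1
    have h2 := (hP i hi).2
    have hb := heccb (p.getVert i)
    have hti : t i = (i - r) + ((d - i) - r) := rfl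
    omega
  have hpeel : ∀ f : ℕ → ℕ, ∑ i ∈ Finset.range (d + 1), f i
      = f 0 + (∑ j ∈ Finset.range (d - 1), f (j + 1)) + f d := by
    intro f
    have h1 : d + 1 = (d - 1 + 1) + 1 := by omega
    rw [h1, Finset.sum_range_succ, Finset.sum_range_succ']
    have h2 : d - 1 + 1 = d := by omega
    rw [h2]
    ring
  have hF0 : m ≤ F (p.getVert 0) := by
    have h1 := hFi 0 (by omega)
    have ht0 : t 0 = m := by
      have : t 0 = (0 - r) + ((d - 0) - r) := rfl
      omega
    have h2 := hdeg1 (p.getVert 0)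
    have h3 : m ≤ T.ecc (p.getVert 0) - r := by omega
    calc m ≤ T.ecc (p.getVert 0) - r := h3
      _ ≤ (T.ecc (p.getVert 0) - r) * Nat.card (T.neighborSet (p.getVert 0)) :=
          Nat.le_mul_of_pos_right _ h2
  have hFd : m ≤ F (p.getVert d) := by
    have h1 := hFi d (le_refl d)
    have htd : t d = m := by
      have : t d = (d - r) + ((d - d) - r) := rfl
      omega
    have h2 := hdeg1 (p.getVert d)
    have h3 : m ≤ T.ecc (p.getVert d) - r := by omega
    calc m ≤ T.ecc (p.getVert d) - r := h3
      _ ≤ (T.ecc (p.getVert d) - r) * Nat.card (T.neighborSet (p.getVert d)) :=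
          Nat.le_mul_of_pos_right _ h2
  have hFint : ∀ j ∈ Finset.range (d - 1), 2 * t (j + 1) ≤ F (p.getVert (j + 1)) := by
    intro j hj
    have hj' := Finset.mem_range.mp hj
    have h1 := hFi (j + 1) (by omega)
    have h2 := hdeg2 (j + 1) (by omega) (by omega)
    calc 2 * t (j + 1) = t (j + 1) * 2 := by ring
      _ ≤ (T.ecc (p.getVert (j + 1)) - r) * Nat.card (T.neighborSet (p.getVert (j + 1))) :=
          Nat.mul_le_mul h1 h2
  -- total of t
  have hrefl : ∑ i ∈ Finset.range (d + 1), ((d - i) - r) = ∑ i ∈ Finset.range (d + 1), (i - r) := by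
    have h := Finset.sum_range_reflect (fun i => i - r) (d + 1)
    simpa using h
  have hTt : ∑ i ∈ Finset.range (d + 1), t i = 2 * ∑ i ∈ Finset.range (d + 1), (i - r) := by
    simp only [ht]
    rw [Finset.sum_add_distrib, hrefl]
    ring
  obtain ⟨M, hM⟩ : ∃ M, m * m = M := ⟨_, rfl⟩
  have hgauss := EciAux.gauss_sub r (d + 1)
  have he1 : d + 1 - r = m + 1 := by omega
  rw [he1, Nat.add_sub_cancel] at hgauss
  have hTt2 : ∑ i ∈ Finset.range (d + 1), t i = M + m := by
    rw [hTt, hgauss, ← hM]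
    ring
  have hAbound : 2 * M ≤ ∑ v ∈ A, F v := by
    rw [hA_sum, hpeel (fun i => F (p.getVert i))]
    have hint : 2 * (∑ j ∈ Finset.range (d - 1), t (j + 1))
        ≤ ∑ j ∈ Finset.range (d - 1), F (p.getVert (j + 1)) := by
      rw [Finset.mul_sum]
      exact Finset.sum_le_sum hFint
    have hpt := hpeel t
    have ht0 : t 0 = m := by
      have : t 0 = (0 - r) + ((d - 0) - r) := rfl
      omega
    have htd : t d = m := by
      have : t d = (d - r) + ((d - d) - r) := rfl
      omega
    rw [hpt, ht0, htd] at hTt2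
    linarith
  -- the master inequality over ℕ
  have hfinal : r * (2 * (n - 1)) + ((n - (d + 1)) + 2 * M) ≤ T.eci := by
    rw [hsplit, hsumD]
    refine Nat.add_le_add_left ?_ _
    calc (n - (d + 1)) + 2 * M
        ≤ (∑ v ∈ Finset.univ \ A, F v) + ∑ v ∈ A, F v := Nat.add_le_add hB hAbound
      _ = ∑ v, F v := hsdiff
  -- cast to ℚ
  have hQ := (Nat.cast_le (α := ℚ)).mpr hfinal
  push_cast [Nat.cast_sub (show 1 ≤ n by omega), Nat.cast_sub hnA] at hQ
  constructor
  · rintro ⟨k, hk⟩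
    have hk' : d = 2 * k := by omega
    have hrk : r = k := by omega
    have hmk : m = k := by omega
    have hMk : M = k * k := by rw [← hM, hmk]
    have hdq : (d : ℚ) = 2 * k := by exact_mod_cast hk'
    have hrq : (r : ℚ) = k := by exact_mod_cast hrk
    have hMq : (M : ℚ) = k * k := by exact_mod_cast hMk
    rw [hrq, hMq, hdq] at hQ
    rw [ge_iff_le, hdq]
    ring_nf
    ring_nf at hQ
    linarith
  · rintro ⟨k, hk⟩
    have hk' : d = 2 * k + 1 := hk
    have hrk : r = k + 1 := by omega
    have hmk : m = k := by omega
    have hMk : M = k * k := by rw [← hM, hmk]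
    have hdq : (d : ℚ) = 2 * k + 1 := by exact_mod_cast hk'
    have hrq : (r : ℚ) = k + 1 := by exact_mod_cast hrk
    have hMq : (M : ℚ) = k * k := by exact_mod_cast hMk
    rw [hrq, hMq, hdq] at hQ
    rw [ge_iff_le, hdq]
    ring_nf
    ring_nf at hQ
    linarith
end
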